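/- arXiv:1003.5569 — 6 statements merged into one kernel-verified Lean document; each statement's English description precedes it below -/
import Mathlib

section
/- For n ≥ 2 and d ≥ n+2, the k-algebra A_{n,d} := k[x_1,...,x_n]/(x_i x_j for 1 ≤ i < j ≤ n, x_h^2 - x_1^{d-n} for 2 ≤ h ≤ n) is a local Artinian Gorenstein k-algebra of dimension d over k with Hilbert function (1, n, 1, 1, ..., 1) (with d - n - 1 trailing ones). -/
/-!
Write `z` for the distinguished variable `x_1` and `e = d - n`. The algebra is the apolar
algebra of `F = y_z^e + ∑_{h ≠ z} y_h^2`: the functional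
`p ↦ coeff_{x_z^e} p + ∑_{h ≠ z} coeff_{x_h^2} p` kills `q * p` for every relation `p`, so it
descends to `A`, and the pairing it induces between `1, x_z, …, x_z^e, x_h` and
`x_z^e, …, x_z, 1, x_h` is the identity. Hence these `n + e` monomials are linearly independent.
The relations reduce every other monomial to `0` or, for `x_h^2`, to `x_z^e`, so they form a
basis in which `𝔪^i` is spanned by the basis monomials of degree `≥ i`; this gives the
dimension and the Hilbert function, and `𝔪^(e+1) = 0` makes `A` local and Artinian. A socle
element pairs to zero with every dual monomial in `𝔪`, i.e. with all but `1`, so the socle is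
`k · x_z^e`.
-/

set_option synthInstance.maxHeartbeats 1000000
set_option maxHeartbeats 1000000

open MvPolynomial

/-- Hilbert function of the quotient `k[x_1,…,x_n]/I` : `i ↦ dim_k M^i/M^{i+1}` where `M` is
the image of the irrelevant maximal ideal (computed as a difference of dimensions). -/
noncomputable def hilbFn {k : Type*} [Field k] {n : ℕ}
    (I : Ideal (MvPolynomial (Fin n) k)) (i : ℕ) : ℕ :=
  Module.finrank k (Submodule.restrictScalars k
    ((Ideal.map (Ideal.Quotient.mk I)
      (Ideal.span (Set.range (X : Fin n → MvPolynomial (Fin n) k)))) ^ i)) -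
  Module.finrank k (Submodule.restrictScalars k
    ((Ideal.map (Ideal.Quotient.mk I)
      (Ideal.span (Set.range (X : Fin n → MvPolynomial (Fin n) k)))) ^ (i + 1)))

theorem isLocalRing_of_forall_isNilpotent_sub_algebraMap {K A : Type*} [Field K] [CommRing A]
    [Nontrivial A] [Algebra K A] (h : ∀ a : A, ∃ c : K, IsNilpotent (a - algebraMap K A c)) :
    IsLocalRing A := by
  refine .of_isUnit_or_isUnit_one_sub_self fun a => ?_
  obtain ⟨c, hc⟩ := h a
  rcases eq_or_ne c 0 with rfl | hc0
  · right
    simpa using hc.isUnit_one_sub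
  · left
    simpa using hc.isUnit_add_left_of_commute
      ((isUnit_iff_ne_zero.mpr hc0).map (algebraMap K A)) (Commute.all _ _)

theorem MvPolynomial.sub_C_coeff_zero_mem_idealOfVars {R σ : Type*} [CommRing R]
    (p : MvPolynomial σ R) : p - C (coeff 0 p) ∈ idealOfVars σ R := by
  rw [← Submodule.pow_one (idealOfVars σ R), mem_pow_idealOfVars_iff']
  intro x hx
  rw [Nat.lt_one_iff, Finsupp.degree_eq_zero_iff] at hx
  simp [hx]

theorem MvPolynomial.isLocalRing_quotient_of_isNilpotent {K σ : Type*} [Field K]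
    (I : Ideal (MvPolynomial σ K)) [Nontrivial (MvPolynomial σ K ⧸ I)]
    (h : IsNilpotent ((idealOfVars σ K).map (Ideal.Quotient.mk I))) :
    IsLocalRing (MvPolynomial σ K ⧸ I) := by
  obtain ⟨N, hN⟩ := h
  refine isLocalRing_of_forall_isNilpotent_sub_algebraMap (K := K) fun a => ?_
  obtain ⟨p, rfl⟩ := Ideal.Quotient.mk_surjective a
  refine ⟨coeff 0 p, N, ?_⟩
  have := Ideal.pow_mem_pow
    (Ideal.mem_map_of_mem (Ideal.Quotient.mk I) (sub_C_coeff_zero_mem_idealOfVars p)) N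
  rwa [hN, Submodule.zero_eq_bot, Ideal.mem_bot, map_sub, ← MvPolynomial.algebraMap_eq,
    Ideal.Quotient.mk_algebraMap] at this

theorem Finsupp.eq_single_or_single_add_single_le {σ : Type*} [Nonempty σ] (m : σ →₀ ℕ) :
    (∃ a, m = single a (m a)) ∨ ∃ a b, a ≠ b ∧ single a 1 + single b 1 ≤ m := by
  classical
  by_cases hm : m.support.card ≤ 1
  · exact .inl (card_support_le_one.mp hm)
  · right
    obtain ⟨a, ha, b, hb, hab⟩ := Finset.one_lt_card.mp (not_le.mp hm)
    refine ⟨a, b, hab, fun c => ?_⟩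
    rw [mem_support_iff] at ha hb
    by_cases hca : c = a <;> by_cases hcb : c = b <;> simp_all [Ne.symm] <;> omega

namespace StretchedGorenstein

noncomputable def relIdeal (k : Type*) [Field k] (n e : ℕ) (z : Fin n) :
    Ideal (MvPolynomial (Fin n) k) :=
  Ideal.span ({p | ∃ i j : Fin n, i < j ∧ p = X i * X j} ∪
    {p | ∃ h : Fin n, h ≠ z ∧ p = X h ^ 2 - X z ^ e})

variable {k : Type*} [Field k] {n e : ℕ} {z : Fin n}

local notation "𝔸" => MvPolynomial (Fin n) k ⧸ relIdeal k n e z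
local notation "π" => Ideal.Quotient.mk (relIdeal k n e z)
local notation "𝔪" => Ideal.map π (idealOfVars (Fin n) k)

theorem mk_X_mem_maxIdeal {a : Fin n} : π (X a) ∈ 𝔪 :=
  Ideal.mem_map_of_mem π (Ideal.subset_span ⟨a, rfl⟩)

theorem mk_X_mul_X {i j : Fin n} (hij : i ≠ j) : π (X i * X j) = 0 := by
  rw [Ideal.Quotient.eq_zero_iff_mem]
  rcases hij.lt_or_gt with hlt | hgt
  · exact Ideal.subset_span (.inl ⟨i, j, hlt, rfl⟩)
  · exact Ideal.subset_span (.inl ⟨j, i, hgt, mul_comm _ _⟩)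

theorem mk_X_sq {h : Fin n} (hh : h ≠ z) : π (X h ^ 2) = π (X z ^ e) :=
  Ideal.Quotient.eq.mpr (Ideal.subset_span (.inr ⟨h, hh, rfl⟩))

theorem mk_X_pow_mul_X {h : Fin n} (hh : h ≠ z) {a : ℕ} (ha : a ≠ 0) :
    π (X z ^ a * X h) = 0 := by
  obtain ⟨a, rfl⟩ := Nat.exists_eq_succ_of_ne_zero ha
  rw [pow_succ, mul_assoc, map_mul, mk_X_mul_X hh.symm, mul_zero]

theorem mk_X_pow_eq_zero (hn : 2 ≤ n) {s : ℕ} (hs : e < s) : π (X z ^ s) = 0 := by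
  obtain ⟨h, hh⟩ := Fintype.exists_ne_of_one_lt_card (by simp; omega) z
  obtain ⟨s, rfl⟩ := Nat.exists_eq_add_of_lt hs
  calc π (X z ^ (e + s + 1)) = π (X z ^ e) * π (X z) * π (X z ^ s) := by
        simp only [← map_mul]; ring_nf
    _ = π (X h) * π (X h * X z) * π (X z ^ s) := by
        rw [← mk_X_sq hh]; simp only [← map_mul]; ring_nf
    _ = 0 := by rw [mk_X_mul_X hh, mul_zero, zero_mul]

theorem mk_X_pow_of_ne (he : e ≠ 0) {h : Fin n} (hh : h ≠ z) {s : ℕ} (hs : 3 ≤ s) :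
    π (X h ^ s) = 0 := by
  obtain ⟨s, rfl⟩ := Nat.exists_eq_add_of_le hs
  calc π (X h ^ (3 + s)) = π (X h ^ 2) * π (X h) * π (X h ^ s) := by
        simp only [← map_mul]; ring_nf
    _ = π (X z ^ e * X h) * π (X h ^ s) := by
        rw [mk_X_sq hh]; simp only [← map_mul]
    _ = 0 := by rw [mk_X_pow_mul_X hh he, zero_mul]

variable (k e z) in
noncomputable def dualGen : MvPolynomial (Fin n) k →ₗ[k] k :=
  lcoeff k (Finsupp.single z e) + ∑ h ∈ Finset.univ.erase z, lcoeff k (Finsupp.single h 2)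

theorem dualGen_apply (p : MvPolynomial (Fin n) k) :
    dualGen k e z p =
      coeff (Finsupp.single z e) p +
        ∑ h ∈ Finset.univ.erase z, coeff (Finsupp.single h 2) p := by
  simp [dualGen]

theorem dualGen_mul_X_mul_X (q : MvPolynomial (Fin n) k) {i j : Fin n} (hij : i ≠ j) :
    dualGen k e z (q * (X i * X j)) = 0 := by
  have hnot_le (a : Fin n) (c : ℕ) :
      ¬ Finsupp.single i 1 + Finsupp.single j 1 ≤ Finsupp.single a c := fun hle => by
      have hi := hle i
      have hj := hle j
      simp only [Finsupp.add_apply, Finsupp.single_apply] at hi hj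
      split_ifs at hi hj <;> simp_all
  simp [dualGen_apply, X, monomial_mul, coeff_mul_monomial', hnot_le]

theorem dualGen_mul_X_sq_sub (he : e ≠ 0) (q : MvPolynomial (Fin n) k) {h : Fin n}
    (hh : h ≠ z) :
    dualGen k e z (q * (X h ^ 2 - X z ^ e)) = 0 := by
  have hXh : ∀ h' ∈ Finset.univ.erase z,
      coeff (Finsupp.single h' 2) (q * X h ^ 2) = if h' = h then coeff 0 q else 0 := by
    intro h' _
    split_ifs with hh' <;> simp [hh', X_pow_eq_monomial, coeff_mul_monomial']
  have hXz : ∀ h' ∈ Finset.univ.erase z, coeff (Finsupp.single h' 2) (q * X z ^ e) = 0 := by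
    intro h' hh'
    simp [X_pow_eq_monomial, coeff_mul_monomial', (Finset.ne_of_mem_erase hh').symm, he]
  rw [mul_sub, map_sub, sub_eq_zero, dualGen_apply, dualGen_apply, Finset.sum_congr rfl hXh,
    Finset.sum_congr rfl hXz, Finset.sum_ite_eq', if_pos (by simpa using hh)]
  simp [X_pow_eq_monomial, coeff_mul_monomial', hh]

theorem dualGen_mul_mem (he : e ≠ 0) {p : MvPolynomial (Fin n) k} (hp : p ∈ relIdeal k n e z)
    (q : MvPolynomial (Fin n) k) : dualGen k e z (q * p) = 0 := by
  induction hp using Submodule.span_induction generalizing q with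
  | mem p hp =>
    rcases hp with ⟨i, j, hij, rfl⟩ | ⟨h, hh, rfl⟩
    exacts [dualGen_mul_X_mul_X q hij.ne, dualGen_mul_X_sq_sub he q hh]
  | zero => simp
  | add a b _ _ ha hb => rw [mul_add, map_add, ha, hb, add_zero]
  | smul c p _ hp => rw [smul_eq_mul, ← mul_assoc, hp]

theorem dualGen_X_pow (m : ℕ) : dualGen k e z (X z ^ m) = if m = e then 1 else 0 := by
  rw [dualGen_apply, Finset.sum_eq_zero fun h hh => ?_, add_zero]
  · simp [coeff_X_pow, (Finsupp.single_injective z).eq_iff, eq_comm]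
  · simp [coeff_X_pow, Finsupp.single_eq_single_iff, (Finset.ne_of_mem_erase hh).symm]

theorem dualGen_X {h : Fin n} (hh : h ≠ z) : dualGen k e z (X h) = 0 := by
  simp [dualGen_apply, coeff_X, Finsupp.single_eq_single_iff, hh]

variable (z) in
noncomputable def dualForm (he : e ≠ 0) : 𝔸 →ₗ[k] k :=
  Submodule.liftQ ((relIdeal k n e z).restrictScalars k) (dualGen k e z)
      (fun _ hp => by simpa using dualGen_mul_mem he hp 1) ∘ₗ
    (Submodule.Quotient.restrictScalarsEquiv k (relIdeal k n e z)).symm.toLinearMap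

theorem dualForm_mk (he : e ≠ 0) (p : MvPolynomial (Fin n) k) :
    dualForm z he (π p) = dualGen k e z p :=
  rfl

variable (n e z) in
abbrev BasisIdx := Fin (e + 1) ⊕ {h : Fin n // h ≠ z}

def basisDeg : BasisIdx n e z → ℕ
  | .inl j => j
  | .inr _ => 1

variable (k) in
noncomputable def basisVec : BasisIdx n e z → 𝔸
  | .inl j => π (X z ^ (j : ℕ))
  | .inr h => π (X h)

variable (k) in
noncomputable def dualVec : BasisIdx n e z → 𝔸
  | .inl j => π (X z ^ (e - j))
  | .inr h => π (X h)

theorem dualForm_mk_X_pow_mul_X (he : e ≠ 0) {h : Fin n} (hh : h ≠ z) (a : ℕ) :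
    dualForm z he (π (X z ^ a * X h)) = 0 := by
  rcases eq_or_ne a 0 with rfl | ha
  · rw [pow_zero, one_mul, dualForm_mk, dualGen_X hh]
  · rw [mk_X_pow_mul_X hh ha, map_zero]

theorem dualForm_basisVec_mul_dualVec (he : e ≠ 0) (i i' : BasisIdx n e z) :
    dualForm z he (basisVec k i * dualVec k i') = if i = i' then 1 else 0 := by
  rcases i with j | ⟨h, hh⟩ <;> rcases i' with j' | ⟨h', hh'⟩ <;>
    simp only [basisVec, dualVec, ← map_mul, reduceCtorEq, if_false, Sum.inl.injEq,
      Sum.inr.injEq, Subtype.mk.injEq]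
  · rw [← pow_add, dualForm_mk, dualGen_X_pow]
    grind
  · exact dualForm_mk_X_pow_mul_X he hh' _
  · rw [mul_comm]
    exact dualForm_mk_X_pow_mul_X he hh _
  · split_ifs with hhh
    · rw [← hhh, ← sq, mk_X_sq hh, dualForm_mk, dualGen_X_pow, if_pos rfl]
    · rw [mk_X_mul_X hhh, map_zero]

theorem linearIndependent_basisVec (he : e ≠ 0) :
    LinearIndependent k (basisVec k : BasisIdx n e z → 𝔸) := by
  rw [Fintype.linearIndependent_iff]
  intro c hc i
  have := congrArg (fun a => dualForm z he (a * dualVec k i)) hc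
  simpa only [Finset.sum_mul, smul_mul_assoc, map_sum, map_smul, dualForm_basisVec_mul_dualVec,
    smul_eq_mul, mul_ite, mul_one, mul_zero, Finset.sum_ite_eq', Finset.mem_univ, if_true,
    zero_mul, map_zero] using this

theorem basisVec_mem_pow_basisDeg (i : BasisIdx n e z) : basisVec k i ∈ 𝔪 ^ basisDeg i := by
  rcases i with j | ⟨h, _⟩
  · rw [basisVec, map_pow]
    exact Ideal.pow_mem_pow mk_X_mem_maxIdeal j
  · rw [basisVec, basisDeg, Submodule.pow_one]
    exact mk_X_mem_maxIdeal

theorem mk_X_pow_mem_span (hn : 2 ≤ n) (he : 2 ≤ e) (a : Fin n) (s : ℕ) :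
    π (X a ^ s) ∈ Submodule.span k (basisVec k '' {i | s ≤ basisDeg i}) := by
  by_cases ha : a = z
  · subst ha
    rcases le_or_gt s e with hs | hs
    · exact Submodule.subset_span ⟨.inl ⟨s, by omega⟩, (le_rfl : s ≤ s), rfl⟩
    · rw [mk_X_pow_eq_zero hn hs]
      exact zero_mem _
  · match s with
    | 0 => exact Submodule.subset_span ⟨.inl 0, Nat.zero_le _, by simp [basisVec]⟩
    | 1 =>
      exact Submodule.subset_span ⟨.inr ⟨a, ha⟩, (le_rfl : 1 ≤ 1), by simp [basisVec]⟩
    | 2 =>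
      rw [mk_X_sq ha]
      exact Submodule.subset_span ⟨.inl (Fin.last e), he, rfl⟩
    | s + 3 =>
      rw [mk_X_pow_of_ne (by omega) ha (by omega)]
      exact zero_mem _

theorem mk_monomial_mem_span (hn : 2 ≤ n) (he : 2 ≤ e) {i : ℕ} {m : Fin n →₀ ℕ}
    (hm : i ≤ m.degree) :
    π (monomial m 1) ∈ Submodule.span k (basisVec k '' {t | i ≤ basisDeg t}) := by
  have : Nonempty (Fin n) := ⟨z⟩
  rcases m.eq_single_or_single_add_single_le with ⟨a, hma⟩ | ⟨a, b, hab, hle⟩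
  · rw [hma, Finsupp.degree_single] at hm
    rw [hma, ← X_pow_eq_monomial]
    exact Submodule.span_mono (Set.image_mono fun t ht => hm.trans ht)
      (mk_X_pow_mem_span hn he a _)
  · obtain ⟨q, hq⟩ : X a * X b ∣ monomial m (1 : k) := by
      rw [X, X, monomial_mul, one_mul]
      exact monomial_dvd_monomial.mpr ⟨.inr hle, one_dvd _⟩
    rw [hq, map_mul, mk_X_mul_X hab, zero_mul]
    exact zero_mem _

theorem restrictScalars_maxIdeal_pow (hn : 2 ≤ n) (he : 2 ≤ e) (i : ℕ) :
    (𝔪 ^ i).restrictScalars k = Submodule.span k (basisVec k '' {t | i ≤ basisDeg t}) := by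
  refine le_antisymm (fun x hx => ?_) (Submodule.span_le.mpr ?_)
  · rw [Submodule.restrictScalars_mem, ← Ideal.map_pow] at hx
    obtain ⟨p, hp, rfl⟩ :=
      (Ideal.mem_map_iff_of_surjective _ Ideal.Quotient.mk_surjective).mp hx
    rw [mem_pow_idealOfVars_iff] at hp
    rw [p.as_sum, map_sum]
    refine Submodule.sum_mem _ fun m hm => ?_
    rw [← mul_one (coeff m p), ← smul_eq_mul, ← smul_monomial,
      ← Ideal.Quotient.mkₐ_eq_mk k, map_smul, Ideal.Quotient.mkₐ_eq_mk]
    exact Submodule.smul_mem _ _ (mk_monomial_mem_span hn he (hp m hm))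
  · rintro _ ⟨t, ht, rfl⟩
    exact Ideal.pow_le_pow_right ht (basisVec_mem_pow_basisDeg t)

theorem span_basisVec (hn : 2 ≤ n) (he : 2 ≤ e) :
    Submodule.span k (Set.range (basisVec k : BasisIdx n e z → 𝔸)) = ⊤ := by
  simpa [Ideal.one_eq_top] using (restrictScalars_maxIdeal_pow (k := k) (z := z) hn he 0).symm

variable (k z) in
noncomputable def stdBasis (hn : 2 ≤ n) (he : 2 ≤ e) : Module.Basis (BasisIdx n e z) k 𝔸 :=
  .mk (linearIndependent_basisVec (by omega)) (span_basisVec hn he).ge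

theorem stdBasis_apply (hn : 2 ≤ n) (he : 2 ≤ e) (i : BasisIdx n e z) :
    stdBasis k z hn he i = basisVec k i :=
  Module.Basis.mk_apply ..

theorem stdBasis_repr (hn : 2 ≤ n) (he : 2 ≤ e) (a : 𝔸) (i : BasisIdx n e z) :
    (stdBasis k z hn he).repr a i = dualForm z (by omega) (a * dualVec k i) := by
  have hcoord : (stdBasis k z hn he).coord i =
      dualForm z (by omega) ∘ₗ LinearMap.mulRight k (dualVec k i) :=
    (stdBasis k z hn he).ext fun i' => by
      rw [Module.Basis.coord_apply, Module.Basis.repr_self, LinearMap.comp_apply,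
        LinearMap.mulRight_apply, stdBasis_apply, dualForm_basisVec_mul_dualVec,
        Finsupp.single_apply]
  exact LinearMap.congr_fun hcoord a

theorem card_basisDeg_ge (i : ℕ) :
    Fintype.card {t : BasisIdx n e z // i ≤ basisDeg t} =
      e + 1 - i + if i ≤ 1 then n - 1 else 0 := by
  rw [Fintype.card_congr Equiv.subtypeSum, Fintype.card_sum]
  congr 1
  · simp only [basisDeg, ← not_lt]
    rw [Fintype.card_subtype_compl, Fintype.card_fin, Fintype.card_subtype,
      Fin.card_filter_val_lt]
    omega
  · rw [Fintype.card_subtype]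
    split_ifs with hi <;> simp [basisDeg, hi]

theorem finrank_maxIdeal_pow (hn : 2 ≤ n) (he : 2 ≤ e) (i : ℕ) :
    Module.finrank k ((𝔪 ^ i).restrictScalars k) =
      e + 1 - i + if i ≤ 1 then n - 1 else 0 := by
  rw [restrictScalars_maxIdeal_pow hn he, Set.image_eq_range]
  exact (finrank_span_eq_card ((linearIndependent_basisVec (by omega)).comp _
    Subtype.val_injective)).trans (card_basisDeg_ge i)

theorem finrank_quotient (hn : 2 ≤ n) (he : 2 ≤ e) : Module.finrank k 𝔸 = n + e := by
  have := finrank_maxIdeal_pow (k := k) (z := z) hn he 0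
  rw [Submodule.pow_zero, Ideal.one_eq_top, Submodule.restrictScalars_top, finrank_top,
    if_pos zero_le_one] at this
  omega

theorem dualVec_mem_maxIdeal {i : BasisIdx n e z} (hi : i ≠ .inl (Fin.last e)) :
    dualVec k i ∈ 𝔪 := by
  rcases i with j | ⟨h, _⟩
  · have hj : (j : ℕ) < e := Fin.val_lt_last fun hj => hi (congrArg Sum.inl hj)
    rw [dualVec, map_pow]
    exact Ideal.pow_mem_of_mem _ mk_X_mem_maxIdeal _ (by omega)
  · exact mk_X_mem_maxIdeal

theorem basisVec_last_mul_mk_X (hn : 2 ≤ n) (he : e ≠ 0) (a : Fin n) :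
    basisVec k (.inl (Fin.last e) : BasisIdx n e z) * π (X a) = 0 := by
  rw [basisVec, Fin.val_last, ← map_mul]
  rcases eq_or_ne a z with rfl | ha
  · rw [← pow_succ, mk_X_pow_eq_zero hn (Nat.lt_succ_self e)]
  · rw [mk_X_pow_mul_X ha he]

theorem socle_eq (hn : 2 ≤ n) (he : 2 ≤ e) :
    (Submodule.colon (⊥ : Ideal 𝔸) 𝔪).restrictScalars k =
      k ∙ basisVec k (.inl (Fin.last e) : BasisIdx n e z) := by
  refine le_antisymm (fun s hs => ?_) ?_
  · rw [Submodule.restrictScalars_mem, Submodule.mem_colon] at hs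
    have hcoord (i) (hi : i ≠ .inl (Fin.last e)) : (stdBasis k z hn he).repr s i = 0 := by
      have := hs _ (dualVec_mem_maxIdeal hi)
      rw [smul_eq_mul, Ideal.mem_bot] at this
      rw [stdBasis_repr, this, map_zero]
    rw [← (stdBasis k z hn he).sum_repr s, Finset.sum_eq_single _
      (fun i _ hi => by rw [hcoord i hi, zero_smul]) (by simp), stdBasis_apply]
    exact Submodule.smul_mem _ _ (Submodule.mem_span_singleton_self _)
  · rw [Submodule.span_singleton_le_iff_mem, Submodule.restrictScalars_mem, Ideal.map_span,
      Ideal.colon_span, Submodule.mem_colon]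
    rintro _ ⟨_, ⟨a, rfl⟩, rfl⟩
    rw [smul_eq_mul, Ideal.mem_bot, basisVec_last_mul_mk_X hn (by omega)]

theorem finrank_socle (hn : 2 ≤ n) (he : 2 ≤ e) :
    Module.finrank k ((Submodule.colon (⊥ : Ideal 𝔸) 𝔪).restrictScalars k) = 1 := by
  rw [socle_eq hn he]
  exact finrank_span_singleton ((linearIndependent_basisVec (by omega)).ne_zero _)

theorem maxIdeal_pow_eq_bot (hn : 2 ≤ n) (he : 2 ≤ e) : 𝔪 ^ (e + 1) = ⊥ := by
  have hempty : {t : BasisIdx n e z | e + 1 ≤ basisDeg t} = ∅ := by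
    ext (j | h)
    · simpa [basisDeg] using j.isLt
    · simp [basisDeg]
      omega
  rw [← Submodule.restrictScalars_eq_bot_iff k, restrictScalars_maxIdeal_pow hn he, hempty,
    Set.image_empty, Submodule.span_empty]

theorem isLocalRing (hn : 2 ≤ n) (he : 2 ≤ e) : IsLocalRing 𝔸 := by
  have : Nontrivial 𝔸 :=
    Module.nontrivial_of_finrank_pos (R := k) (by rw [finrank_quotient hn he]; omega)
  exact isLocalRing_quotient_of_isNilpotent _ ⟨e + 1, maxIdeal_pow_eq_bot hn he⟩

theorem isArtinianRing (hn : 2 ≤ n) (he : 2 ≤ e) : IsArtinianRing 𝔸 :=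
  have : Module.Finite k 𝔸 := .of_basis (stdBasis k z hn he)
  .of_finite k 𝔸

end StretchedGorenstein

open StretchedGorenstein

/-- For `n ≥ 2`, `d ≥ n+2`, the algebra
`A_{n,d} = k[x_1,…,x_n]/(x_i x_j (i<j), x_h² - x_1^{d-n} (h ≥ 2))` is a local Artinian
Gorenstein `k`-algebra of dimension `d` over `k` with Hilbert function `(1,n,1,…,1)`
(ones in degrees `2,…,d-n`). -/
theorem stmt_2 (k : Type*) [Field k]
    (n d : ℕ) (hn : 2 ≤ n) (hd : n + 2 ≤ d)
    (I : Ideal (MvPolynomial (Fin n) k))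
    (hI : I = Ideal.span
      ({p | ∃ i j : Fin n, i < j ∧ p = X i * X j} ∪
       {p | ∃ h : Fin n, h ≠ (⟨0, by omega⟩ : Fin n) ∧ p = X h ^ 2 - X (⟨0, by omega⟩ : Fin n) ^ (d - n)})) :
    IsLocalRing (MvPolynomial (Fin n) k ⧸ I) ∧
    IsArtinianRing (MvPolynomial (Fin n) k ⧸ I) ∧
    Module.finrank k (Submodule.restrictScalars k
      (Submodule.colon (⊥ : Ideal (MvPolynomial (Fin n) k ⧸ I))
        (Ideal.map (Ideal.Quotient.mk I)
          (Ideal.span (Set.range (X : Fin n → MvPolynomial (Fin n) k)))))) = 1 ∧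
    Module.finrank k (MvPolynomial (Fin n) k ⧸ I) = d ∧
    hilbFn I 0 = 1 ∧ hilbFn I 1 = n ∧
    (∀ i : ℕ, 2 ≤ i → i ≤ d - n → hilbFn I i = 1) ∧
    (∀ i : ℕ, d - n < i → hilbFn I i = 0) := by
  obtain rfl : I = relIdeal k n (d - n) ⟨0, by omega⟩ := hI
  have he : 2 ≤ d - n := by omega
  have hpow := finrank_maxIdeal_pow (k := k) (z := ⟨0, by omega⟩) hn he
  refine ⟨isLocalRing hn he, isArtinianRing hn he, finrank_socle hn he,
    by rw [finrank_quotient hn he]; omega, ?_, ?_, ?_, ?_⟩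
  all_goals
    intros
    simp only [hilbFn, hpow]
    split_ifs <;> omega
end

section
/- Let g ∈ R_d be a nonzero homogeneous form of degree d, and let g^⊥ := {f ∈ S : f(g) = 0} where S acts on R by partial derivations. Then g^⊥ is a homogeneous ideal of S and S/g^⊥ is an Artinian Gorenstein graded k-algebra with socle concentrated in degree d. -/
/-!
Apolarity is an action of `S` on `R`: `(f * h) ∘ g = f ∘ (h ∘ g)`, so `g^⊥` is the annihilator
ideal of `g`. A form of degree `n` sends `R_d` to `R_{d-n}` (and to `0` if `n > d`), so `g^⊥` is
homogeneous and contains all monomials of degree `> d`; thus `S/g^⊥` is spanned by the classes of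
forms of degree `≤ d`. Since `x_i ∘ - = ∂/∂y_i`, the class of `f` lies in the socle iff
every partial derivative of `f ∘ g` vanishes, i.e. (in characteristic `0`) iff `f ∘ g` is a
constant `c`. Choosing a degree-`d` monomial `p` with `p ∘ g = 1`, possible as `g ≠ 0`, this
says `f ≡ c • p` modulo `g^⊥`.
-/

set_option synthInstance.maxHeartbeats 1000000
set_option maxHeartbeats 1000000

open MvPolynomial

/-- The apolarity action of `S = k[x_1,…,x_N]` on `R = k[y_1,…,y_N]` (`x_i ↦ ∂/∂y_i`). -/
noncomputable def apolar {k : Type*} [Field k] {N : ℕ}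
    (f g : MvPolynomial (Fin N) k) : MvPolynomial (Fin N) k :=
  f.support.sum fun α => g.support.sum fun β =>
    (f.coeff α * g.coeff β * ∏ i, ((β i).descFactorial (α i) : k)) •
      monomial (β - α) (1 : k)

lemma Finsupp.degree_tsub {σ : Type*} {α β : σ →₀ ℕ} (h : α ≤ β) :
    (β - α).degree = β.degree - α.degree := by
  obtain ⟨γ, rfl⟩ := exists_add_of_le h
  rw [add_tsub_cancel_left, map_add, add_tsub_cancel_left]

lemma MvPolynomial.IsHomogeneous.degree_eq_of_mem_support {σ R : Type*} [CommSemiring R]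
    {φ : MvPolynomial σ R} {n : ℕ} (hφ : φ.IsHomogeneous n) {s : σ →₀ ℕ}
    (hs : s ∈ φ.support) : s.degree = n :=
  (hφ.degree_eq_sum_deg_support hs).symm

lemma MvPolynomial.eq_C_of_forall_pderiv_eq_zero {σ R : Type*} [CommSemiring R]
    [NoZeroDivisors R] [CharZero R] {p : MvPolynomial σ R} (h : ∀ i, pderiv i p = 0) :
    p = C (coeff 0 p) := by
  classical
  ext β
  rw [coeff_C]
  split_ifs with hβ
  · rw [hβ]
  obtain ⟨i, hi⟩ : ∃ i, β i ≠ 0 := by simpa [Finsupp.ext_iff] using Ne.symm hβ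
  have key := coeff_pderiv (i := i) p (β - Finsupp.single i 1)
  rw [h i, coeff_zero, tsub_add_cancel_of_le
    (Finsupp.single_le_iff.mpr (Nat.one_le_iff_ne_zero.mpr hi))] at key
  exact (mul_eq_zero.mp key.symm).resolve_right (Nat.cast_add_one_ne_zero _)

section Apolar

variable {k : Type*} [Field k] {N : ℕ}

lemma apolar_eq_sum (f g : MvPolynomial (Fin N) k) {T U : Finset (Fin N →₀ ℕ)}
    (hT : f.support ⊆ T) (hU : g.support ⊆ U) :
    apolar f g = ∑ α ∈ T, ∑ β ∈ U,
      (f.coeff α * g.coeff β * ∏ i, ((β i).descFactorial (α i) : k)) •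
        monomial (β - α) (1 : k) := by
  rw [apolar, Finset.sum_subset hT]
  · refine Finset.sum_congr rfl fun α _ => Finset.sum_subset hU fun β _ hβ => ?_
    simp [notMem_support_iff.mp hβ]
  · intro α _ hα
    simp [notMem_support_iff.mp hα]

lemma apolar_add_left (f₁ f₂ g : MvPolynomial (Fin N) k) :
    apolar (f₁ + f₂) g = apolar f₁ g + apolar f₂ g := by
  rw [apolar_eq_sum _ g support_add subset_rfl,
    apolar_eq_sum f₁ g (Finset.subset_union_left (s₂ := f₂.support)) subset_rfl,
    apolar_eq_sum f₂ g (Finset.subset_union_right (s₁ := f₁.support)) subset_rfl]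
  simp only [coeff_add, add_mul, add_smul, Finset.sum_add_distrib]

lemma apolar_add_right (f g₁ g₂ : MvPolynomial (Fin N) k) :
    apolar f (g₁ + g₂) = apolar f g₁ + apolar f g₂ := by
  rw [apolar_eq_sum f _ subset_rfl support_add,
    apolar_eq_sum f g₁ subset_rfl (Finset.subset_union_left (s₂ := g₂.support)),
    apolar_eq_sum f g₂ subset_rfl (Finset.subset_union_right (s₁ := g₁.support))]
  simp only [coeff_add, mul_add, add_mul, add_smul, Finset.sum_add_distrib]

lemma apolar_smul_left (c : k) (f g : MvPolynomial (Fin N) k) :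
    apolar (c • f) g = c • apolar f g := by
  rw [apolar_eq_sum _ g support_smul subset_rfl, apolar_eq_sum f g subset_rfl subset_rfl]
  simp only [Finset.smul_sum, smul_smul, coeff_smul, smul_eq_mul, mul_assoc]

lemma apolar_smul_right (c : k) (f g : MvPolynomial (Fin N) k) :
    apolar f (c • g) = c • apolar f g := by
  rw [apolar_eq_sum f _ subset_rfl support_smul, apolar_eq_sum f g subset_rfl subset_rfl]
  simp only [Finset.smul_sum, smul_smul, coeff_smul, smul_eq_mul, mul_assoc, mul_left_comm c]

variable (k N) in
noncomputable def apolarBilin :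
    MvPolynomial (Fin N) k →ₗ[k] MvPolynomial (Fin N) k →ₗ[k] MvPolynomial (Fin N) k :=
  LinearMap.mk₂ k apolar apolar_add_left apolar_smul_left apolar_add_right apolar_smul_right

@[simp]
lemma apolarBilin_apply (f g : MvPolynomial (Fin N) k) : apolarBilin k N f g = apolar f g :=
  rfl

lemma apolar_monomial (α β : Fin N →₀ ℕ) (a b : k) :
    apolar (monomial α a) (monomial β b)
      = monomial (β - α) (a * b * ∏ i, ((β i).descFactorial (α i) : k)) := by
  rw [apolar_eq_sum _ _ support_monomial_subset support_monomial_subset]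
  simp [smul_monomial]

lemma prod_descFactorial_eq_zero {α β : Fin N →₀ ℕ} (h : ¬ α ≤ β) :
    ∏ i, ((β i).descFactorial (α i) : k) = 0 := by
  obtain ⟨i, hi⟩ := not_forall.mp (mt Finsupp.le_def.mpr h)
  exact Finset.prod_eq_zero (Finset.mem_univ i) (by
    rw [Nat.descFactorial_eq_zero_iff_lt.mpr (not_le.mp hi), Nat.cast_zero])

lemma apolar_mul (f h g : MvPolynomial (Fin N) k) :
    apolar (f * h) g = apolar f (apolar h g) := by
  induction f using MvPolynomial.induction_on' with
  | add p q hp hq => rw [add_mul, apolar_add_left, apolar_add_left, hp, hq]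
  | monomial α a =>
  induction h using MvPolynomial.induction_on' with
  | add p q hp hq => rw [mul_add, apolar_add_left, apolar_add_left, apolar_add_right, hp, hq]
  | monomial γ c =>
  induction g using MvPolynomial.induction_on' with
  | add p q hp hq => rw [apolar_add_right, apolar_add_right, apolar_add_right, hp, hq]
  | monomial β b =>
  have hdesc (i : Fin N) : ((β i).descFactorial ((α + γ) i) : k)
      = ((β i).descFactorial (γ i) : k) * (((β - γ) i).descFactorial (α i) : k) := by
    rw [← Nat.cast_mul, mul_comm, Finsupp.add_apply, Finsupp.tsub_apply,
      ← Nat.descFactorial_mul_descFactorial (Nat.le_add_left (γ i) (α i)), Nat.add_sub_cancel]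
  simp only [monomial_mul, apolar_monomial, hdesc, Finset.prod_mul_distrib, tsub_tsub,
    add_comm γ α]
  ring_nf

lemma apolar_X (i : Fin N) (h : MvPolynomial (Fin N) k) : apolar (X i) h = pderiv i h := by
  induction h using MvPolynomial.induction_on' with
  | add p q hp hq => rw [apolar_add_right, hp, hq, map_add]
  | monomial β b =>
    rw [X, apolar_monomial, pderiv_monomial, Finset.prod_eq_single i]
    · simp
    · intro j _ hj
      simp [Finsupp.single_eq_of_ne' hj.symm]
    · simp

lemma coeff_zero_apolar_monomial (α : Fin N →₀ ℕ) (a : k) (g : MvPolynomial (Fin N) k) :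
    coeff 0 (apolar (monomial α a) g) = a * coeff α g * ∏ i, ((α i).factorial : k) := by
  induction g using MvPolynomial.induction_on' with
  | add p q hp hq => rw [apolar_add_right, coeff_add, hp, hq, coeff_add, mul_add, add_mul]
  | monomial β b =>
    rw [apolar_monomial, coeff_monomial, coeff_monomial]
    by_cases hβα : β = α
    · simp [hβα, Nat.descFactorial_self]
    · rw [if_neg hβα, mul_zero, zero_mul, ite_eq_right_iff]
      intro hsub
      have hnle : ¬ α ≤ β := fun hle => hβα (le_antisymm (tsub_eq_zero_iff_le.mp hsub) hle)
      rw [prod_descFactorial_eq_zero hnle, mul_zero]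

lemma isHomogeneous_apolar {f g : MvPolynomial (Fin N) k} {n d : ℕ}
    (hf : f.IsHomogeneous n) (hg : g.IsHomogeneous d) : (apolar f g).IsHomogeneous (d - n) := by
  refine IsHomogeneous.sum _ _ _ fun α hα => IsHomogeneous.sum _ _ _ fun β hβ => ?_
  by_cases hle : α ≤ β
  · rw [smul_monomial]
    refine isHomogeneous_monomial _ ?_
    rw [Finsupp.degree_tsub hle, hf.degree_eq_of_mem_support hα, hg.degree_eq_of_mem_support hβ]
  · simpa [prod_descFactorial_eq_zero hle] using isHomogeneous_zero _ _ _

lemma apolar_eq_zero_of_lt {f g : MvPolynomial (Fin N) k} {n d : ℕ}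
    (hf : f.IsHomogeneous n) (hg : g.IsHomogeneous d) (h : d < n) : apolar f g = 0 := by
  refine Finset.sum_eq_zero fun α hα => Finset.sum_eq_zero fun β hβ => ?_
  have hle : ¬ α ≤ β := fun hle => by
    have := Finsupp.degree_mono hle
    rw [hf.degree_eq_of_mem_support hα, hg.degree_eq_of_mem_support hβ] at this
    omega
  rw [prod_descFactorial_eq_zero hle, mul_zero, zero_smul]

lemma apolar_zero_left (g : MvPolynomial (Fin N) k) : apolar 0 g = 0 :=
  LinearMap.map_zero₂ (apolarBilin k N) g

lemma apolar_zero_right (f : MvPolynomial (Fin N) k) : apolar f 0 = 0 :=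
  map_zero (apolarBilin k N f)

lemma homogeneousComponent_apolar {g : MvPolynomial (Fin N) k} {n d : ℕ}
    (hg : g.IsHomogeneous d) (hn : n ≤ d) (f : MvPolynomial (Fin N) k) :
    homogeneousComponent (d - n) (apolar f g) = apolar (homogeneousComponent n f) g := by
  conv_lhs => rw [← sum_homogeneousComponent f]
  rw [← apolarBilin_apply, LinearMap.map_sum₂, map_sum]
  simp only [apolarBilin_apply]
  refine (Finset.sum_eq_single n (fun m _ hmn => ?_) fun hn' => ?_).trans ?_
  · rcases lt_or_ge d m with hdm | hmd
    · rw [apolar_eq_zero_of_lt (homogeneousComponent_isHomogeneous m f) hg hdm, map_zero]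
    · rw [homogeneousComponent_of_mem
        (isHomogeneous_apolar (homogeneousComponent_isHomogeneous m f) hg), if_neg (by omega)]
  · rw [homogeneousComponent_eq_zero n f (by simpa using hn'), apolar_zero_left, map_zero]
  · rw [homogeneousComponent_of_mem
      (isHomogeneous_apolar (homogeneousComponent_isHomogeneous n f) hg), if_pos rfl]

end Apolar

section Annihilator

variable {k : Type*} [Field k] {N : ℕ}

def apolarAnnihilator (g : MvPolynomial (Fin N) k) : Ideal (MvPolynomial (Fin N) k) where
  carrier := {f | apolar f g = 0}
  add_mem' {f₁ f₂} h₁ h₂ := by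
    change apolar (f₁ + f₂) g = 0
    rw [apolar_add_left, h₁, h₂, add_zero]
  zero_mem' := apolar_zero_left g
  smul_mem' c f hf := by
    change apolar (c * f) g = 0
    rw [apolar_mul, hf, apolar_zero_right]

lemma mem_apolarAnnihilator {g f : MvPolynomial (Fin N) k} :
    f ∈ apolarAnnihilator g ↔ apolar f g = 0 :=
  Iff.rfl

lemma homogeneousComponent_mem_apolarAnnihilator {g f : MvPolynomial (Fin N) k} {d : ℕ}
    (hg : g.IsHomogeneous d) (hf : f ∈ apolarAnnihilator g) (n : ℕ) :
    homogeneousComponent n f ∈ apolarAnnihilator g := by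
  rw [mem_apolarAnnihilator]
  rcases lt_or_ge d n with hdn | hnd
  · exact apolar_eq_zero_of_lt (homogeneousComponent_isHomogeneous n f) hg hdn
  · rw [← homogeneousComponent_apolar hg hnd, mem_apolarAnnihilator.mp hf, map_zero]

/-- Monomials of degree `> d` lie in `g^⊥`, so the quotient is spanned by the image of the
polynomials of degree `≤ d`. -/
lemma finiteDimensional_quotient_apolarAnnihilator {g : MvPolynomial (Fin N) k} {d : ℕ}
    (hg : g.IsHomogeneous d) :
    FiniteDimensional k (MvPolynomial (Fin N) k ⧸ apolarAnnihilator g) := by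
  let φ := (Ideal.Quotient.mkₐ k (apolarAnnihilator g)).toLinearMap ∘ₗ
    (restrictTotalDegree (Fin N) k d).subtype
  refine Module.Finite.of_surjective φ fun x => ?_
  obtain ⟨f, rfl⟩ := Ideal.Quotient.mk_surjective x
  change _ ∈ LinearMap.range φ
  induction f using MvPolynomial.induction_on' with
  | add p q hp hq => rw [map_add]; exact add_mem hp hq
  | monomial α a =>
    by_cases hα : α.degree ≤ d
    · exact ⟨⟨monomial α a, (mem_restrictTotalDegree _ _ _).mpr
        ((isHomogeneous_monomial a rfl).totalDegree_le.trans hα)⟩, rfl⟩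
    · rw [Ideal.Quotient.eq_zero_iff_mem.mpr (apolar_eq_zero_of_lt
        (isHomogeneous_monomial a rfl) hg (not_le.mp hα))]
      exact zero_mem _

lemma exists_isHomogeneous_apolar_eq_one [CharZero k] {g : MvPolynomial (Fin N) k} {d : ℕ}
    (hg : g.IsHomogeneous d) (hg0 : g ≠ 0) : ∃ p, p.IsHomogeneous d ∧ apolar p g = 1 := by
  obtain ⟨α, hα⟩ := support_nonempty.mpr hg0
  have hc : coeff α g * ∏ i, ((α i).factorial : k) ≠ 0 :=
    mul_ne_zero (mem_support_iff.mp hα)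
      (Finset.prod_ne_zero_iff.mpr fun i _ => Nat.cast_ne_zero.mpr (Nat.factorial_ne_zero _))
  have hp := isHomogeneous_monomial (coeff α g * ∏ i, ((α i).factorial : k))⁻¹
    (hg.degree_eq_of_mem_support hα)
  refine ⟨_, hp, ?_⟩
  have hconst := (isHomogeneous_apolar hp hg).totalDegree_le
  rw [tsub_self, nonpos_iff_eq_zero, totalDegree_eq_zero_iff_eq_C] at hconst
  rw [hconst, coeff_zero_apolar_monomial, mul_assoc, inv_mul_cancel₀ hc, C_1]

lemma forall_mk_X_mul_eq_zero_iff [CharZero k] {g f : MvPolynomial (Fin N) k} :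
    (∀ i, Ideal.Quotient.mk (apolarAnnihilator g) (X i) *
      Ideal.Quotient.mk (apolarAnnihilator g) f = 0) ↔ ∃ c : k, apolar f g = C c := by
  simp only [← map_mul, Ideal.Quotient.eq_zero_iff_mem, mem_apolarAnnihilator, apolar_mul,
    apolar_X]
  exact ⟨fun h => ⟨_, eq_C_of_forall_pderiv_eq_zero h⟩,
    fun ⟨c, hc⟩ i => hc ▸ pderiv_C⟩

lemma mk_eq_smul_mk_iff {g p : MvPolynomial (Fin N) k} (hp : apolar p g = 1)
    (f : MvPolynomial (Fin N) k) (c : k) :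
    Ideal.Quotient.mk (apolarAnnihilator g) f = c • Ideal.Quotient.mk (apolarAnnihilator g) p ↔
      apolar f g = C c := by
  have hsub : apolar (f - c • p) g = apolar f g - C c := by
    rw [← apolarBilin_apply, LinearMap.map_sub₂, LinearMap.map_smul₂]
    simp [hp, smul_eq_C_mul]
  rw [← Ideal.Quotient.mkₐ_eq_mk k, ← map_smul, Ideal.Quotient.mkₐ_eq_mk, Ideal.Quotient.eq,
    mem_apolarAnnihilator, hsub, sub_eq_zero]

end Annihilator

/-- Let `g` be a nonzero form of degree `d`.  Then `g^⊥ = {f ∈ S : f(g) = 0}` is a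
homogeneous ideal of `S`, and `S/g^⊥` is an Artinian (finite-dimensional) Gorenstein graded
`k`-algebra with socle concentrated in degree `d` (the socle is a line, and every socle
element is the class of a homogeneous polynomial of degree `d`). -/
theorem stmt_4 (k : Type*) [Field k] [CharZero k] (N d : ℕ)
    (g : MvPolynomial (Fin N) k) (hg : g ≠ 0) (hgd : g ∈ homogeneousSubmodule (Fin N) k d) :
    ∃ I : Ideal (MvPolynomial (Fin N) k),
      (∀ f, f ∈ I ↔ apolar f g = 0) ∧
      (∀ f ∈ I, ∀ n : ℕ, homogeneousComponent n f ∈ I) ∧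
      FiniteDimensional k (MvPolynomial (Fin N) k ⧸ I) ∧
      (∃ a : MvPolynomial (Fin N) k ⧸ I, a ≠ 0 ∧
        ∀ b : MvPolynomial (Fin N) k ⧸ I,
          ((∀ i : Fin N, Ideal.Quotient.mk I (X i) * b = 0) ↔ ∃ c : k, b = c • a)) ∧
      (∀ b : MvPolynomial (Fin N) k ⧸ I,
        (∀ i : Fin N, Ideal.Quotient.mk I (X i) * b = 0) →
        ∃ p ∈ homogeneousSubmodule (Fin N) k d, Ideal.Quotient.mk I p = b) := by
  obtain ⟨p, hpd, hp⟩ := exists_isHomogeneous_apolar_eq_one hgd hg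
  have hsocle (b : MvPolynomial (Fin N) k ⧸ apolarAnnihilator g) :
      (∀ i, Ideal.Quotient.mk _ (X i) * b = 0) ↔
        ∃ c : k, b = c • Ideal.Quotient.mk _ p := by
    obtain ⟨f, rfl⟩ := Ideal.Quotient.mk_surjective b
    simp only [forall_mk_X_mul_eq_zero_iff, mk_eq_smul_mk_iff hp]
  refine ⟨apolarAnnihilator g, fun f => mem_apolarAnnihilator,
    fun f hf => homogeneousComponent_mem_apolarAnnihilator hgd hf,
    finiteDimensional_quotient_apolarAnnihilator hgd, ⟨_, ?_, hsocle⟩, fun b hb => ?_⟩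
  · rw [Ne, Ideal.Quotient.eq_zero_iff_mem, mem_apolarAnnihilator, hp]
    exact one_ne_zero
  · obtain ⟨c, rfl⟩ := (hsocle b).mp hb
    exact ⟨c • p, Submodule.smul_mem _ c hpd, map_smul (Ideal.Quotient.mkₐ k _) c p⟩
end

section
/- Let g ∈ R_d be a homogeneous form of degree d, A := S/g^⊥, and t ≤ N. Then dim_k A_1 ≤ t if and only if there exist linear forms ℓ_1,...,ℓ_t ∈ R_1 such that g ∈ k[ℓ_1,...,ℓ_t]. -/
/-!
The degree-one part `A_1` is the image of the linear forms `∑ cᵢ xᵢ`, and such a form lies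
in `g^⊥` exactly when the directional derivative `∂_c g` vanishes. So `dim A_1` is the rank
of `c ↦ ∂_c g`, the codimension of the space `V` of directions along which `g` is constant.
If `g ∈ k[ℓ_1,…,ℓ_t]`, every direction killed by all `ℓ_i` kills `g`, so this rank is at
most `t`. Conversely, after a linear change of coordinates adapted to a basis of `k^N`
extending one of `V`, the last partial derivatives of `g` vanish; in characteristic zero `g`
then involves only the first `codim V` coordinates, which are linear forms in the original
variables.
-/

set_option synthInstance.maxHeartbeats 1000000
set_option maxHeartbeats 1000000

open MvPolynomial

open Module

theorem LinearMap.finrank_range_le_of_ker_le {K V W W' : Type*} [DivisionRing K]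
    [AddCommGroup V] [Module K V] [FiniteDimensional K V] [AddCommGroup W] [Module K W]
    [AddCommGroup W'] [Module K W'] {f : V →ₗ[K] W} {f' : V →ₗ[K] W'} (h : ker f ≤ ker f') :
    finrank K (range f') ≤ finrank K (range f) := by
  have := f.finrank_range_add_finrank_ker
  have := f'.finrank_range_add_finrank_ker
  have := Submodule.finrank_mono h
  omega

theorem Algebra.exists_adjoin_range_fin_of_le {R A : Type*} [CommSemiring R] [Semiring A]
    [Algebra R A] (M : Submodule R A) {s t : ℕ} (hst : s ≤ t) {ℓ : Fin s → A} (hℓ : ∀ i, ℓ i ∈ M)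
    {a : A} (ha : a ∈ adjoin R (Set.range ℓ)) :
    ∃ ℓ' : Fin t → A, (∀ i, ℓ' i ∈ M) ∧ a ∈ adjoin R (Set.range ℓ') := by
  have hinj := Fin.castLE_injective hst
  refine ⟨Function.extend (Fin.castLE hst) ℓ 0, fun i => ?_, adjoin_mono ?_ ha⟩
  · by_cases hi : ∃ j, Fin.castLE hst j = i
    · obtain ⟨j, rfl⟩ := hi
      rw [hinj.extend_apply]
      exact hℓ j
    · rw [Function.extend_apply' _ _ _ hi]
      exact M.zero_mem
  · rintro _ ⟨j, rfl⟩
    exact ⟨Fin.castLE hst j, hinj.extend_apply _ _ _⟩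

namespace MvPolynomial

section DirDeriv
variable {R σ : Type*} [CommSemiring R] [Fintype σ]

noncomputable def dirDeriv (c : σ → R) : Derivation R (MvPolynomial σ R) (MvPolynomial σ R) :=
  ∑ i, c i • pderiv i

theorem dirDeriv_apply (c : σ → R) (p : MvPolynomial σ R) :
    dirDeriv c p = ∑ i, c i • pderiv i p := by
  rw [dirDeriv, ← Derivation.coeFnAddMonoidHom_apply, map_sum, Finset.sum_apply]
  rfl

noncomputable def dirDerivMap (p : MvPolynomial σ R) : (σ → R) →ₗ[R] MvPolynomial σ R :=
  Fintype.linearCombination R fun i => pderiv i p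

theorem dirDerivMap_apply (p : MvPolynomial σ R) (c : σ → R) :
    dirDerivMap p c = dirDeriv c p := by
  rw [dirDerivMap, Fintype.linearCombination_apply, dirDeriv_apply]

theorem pderiv_linearCombination_X (a : σ → R) (j : σ) :
    pderiv j (Fintype.linearCombination R X a) = C (a j) := by
  classical
  simp [Fintype.linearCombination_apply, pderiv_X, Pi.single_apply, smul_eq_C_mul]

theorem dirDeriv_linearCombination_X (c a : σ → R) :
    dirDeriv c (Fintype.linearCombination R X a) = C (a ⬝ᵥ c) := by
  simp [dirDeriv_apply, pderiv_linearCombination_X, dotProduct, smul_eq_C_mul, mul_comm]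

end DirDeriv

theorem pderiv_aeval {R σ ι : Type*} [CommSemiring R] [Fintype σ] (φ : σ → MvPolynomial ι R)
    (j : ι) (p : MvPolynomial σ R) :
    pderiv j (aeval φ p) = ∑ i, aeval φ (pderiv i p) * pderiv j (φ i) := by
  classical
  induction p using MvPolynomial.induction_on with
  | C a => simp
  | add p q hp hq => simp only [map_add, hp, hq, add_mul, Finset.sum_add_distrib]
  | mul_X p i hp =>
    simp only [map_mul, aeval_X, Derivation.leibniz, pderiv_X, hp, smul_eq_mul, map_add, add_mul,
      Finset.sum_add_distrib, Finset.mul_sum]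
    simp [Pi.single_apply, mul_assoc]

section LinearSubst
variable {R σ ι τ : Type*} [CommSemiring R] [Fintype ι] [Fintype τ]

/-- `linearSubst M p` is the polynomial function `y ↦ p (M *ᵥ y)`. -/
noncomputable def linearSubst (M : Matrix σ ι R) : MvPolynomial σ R →ₐ[R] MvPolynomial ι R :=
  aeval fun i => Fintype.linearCombination R X (M i)

theorem linearSubst_X_mem_homogeneousSubmodule (M : Matrix σ ι R) (i : σ) :
    linearSubst M (X i) ∈ homogeneousSubmodule ι R 1 := by
  rw [linearSubst, aeval_X, homogeneousSubmodule_one_eq_span_X,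
    ← Fintype.range_linearCombination]
  exact LinearMap.mem_range_self _ _

theorem linearSubst_linearSubst (M : Matrix σ ι R) (N : Matrix ι τ R) (p : MvPolynomial σ R) :
    linearSubst N (linearSubst M p) = linearSubst (M * N) p := by
  rw [linearSubst, linearSubst, ← AlgHom.comp_apply, comp_aeval, linearSubst]
  congr 2
  funext i
  simp [Fintype.linearCombination_apply, Matrix.mul_apply, Finset.smul_sum, Finset.sum_smul,
    smul_smul, Finset.sum_comm (γ := ι)]

theorem linearSubst_one [DecidableEq ι] (p : MvPolynomial ι R) :
    linearSubst (1 : Matrix ι ι R) p = p := by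
  have h : (fun i => Fintype.linearCombination R X ((1 : Matrix ι ι R) i)) =
      (X : ι → MvPolynomial ι R) := by
    funext i
    simp [Fintype.linearCombination_apply, Matrix.one_apply]
  rw [linearSubst, h, aeval_X_left_apply]

theorem pderiv_linearSubst [Fintype σ] (M : Matrix σ ι R) (j : ι) (p : MvPolynomial σ R) :
    pderiv j (linearSubst M p) = linearSubst M (dirDeriv (fun i => M i j) p) := by
  rw [linearSubst, pderiv_aeval, dirDeriv_apply, map_sum]
  refine Finset.sum_congr rfl fun i _ => ?_
  rw [pderiv_linearCombination_X, map_smul, smul_eq_C_mul, mul_comm]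

end LinearSubst

theorem notMem_vars_of_pderiv_eq_zero {R σ : Type*} [CommSemiring R] [NoZeroDivisors R]
    [CharZero R] {i : σ} {p : MvPolynomial σ R} (h : pderiv i p = 0) : i ∉ p.vars := by
  intro hi
  obtain ⟨m, hm, hmi⟩ := (mem_vars_iff_mem_support i).mp hi
  have hle : Finsupp.single i 1 ≤ m :=
    Finsupp.single_le_iff.mpr (Nat.one_le_iff_ne_zero.mpr (Finsupp.mem_support_iff.mp hmi))
  have hcoeff := coeff_pderiv (i := i) p (m - Finsupp.single i 1)
  rw [h, coeff_zero, tsub_add_cancel_of_le hle] at hcoeff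
  exact mem_support_iff.mp hm ((mul_eq_zero.mp hcoeff.symm).resolve_right (by norm_cast))

theorem exists_rename_inl_eq_of_pderiv_inr_eq_zero {R ι κ : Type*} [CommSemiring R]
    [NoZeroDivisors R] [CharZero R] {p : MvPolynomial (ι ⊕ κ) R}
    (h : ∀ j, pderiv (Sum.inr j) p = 0) : ∃ q, rename Sum.inl q = p := by
  refine exists_rename_eq_of_vars_subset_range p _ Sum.inl_injective ?_
  rintro (i | j) hj
  · exact ⟨i, rfl⟩
  · exact absurd hj (notMem_vars_of_pderiv_eq_zero (h j))

/-- `linearSubst (b.toMatrix (Pi.basisFun k σ)) (X j)` is the `j`-th coordinate form of `b`. -/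
theorem mem_adjoin_of_dirDeriv_basis_eq_zero {k σ ι κ : Type*} [Field k] [CharZero k]
    [Fintype σ] [Fintype ι] [Fintype κ] (b : Basis (ι ⊕ κ) k (σ → k))
    {g : MvPolynomial σ k} (hb : ∀ j, dirDeriv (b (Sum.inr j)) g = 0) :
    g ∈ Algebra.adjoin k
      (Set.range fun i => linearSubst (b.toMatrix (Pi.basisFun k σ)) (X (Sum.inl i))) := by
  classical
  set M := (Pi.basisFun k σ).toMatrix b
  set M' := b.toMatrix (Pi.basisFun k σ)
  obtain ⟨q, hq⟩ : ∃ q, rename Sum.inl q = linearSubst M g := by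
    refine exists_rename_inl_eq_of_pderiv_inr_eq_zero fun j => ?_
    have hcol : (fun i => M i (Sum.inr j)) = b (Sum.inr j) := by
      funext i
      simp [M, Basis.toMatrix_apply]
    rw [pderiv_linearSubst, hcol, hb j, map_zero]
  have hg : g = aeval (fun i => linearSubst M' (X (Sum.inl i))) q := by
    rw [← linearSubst_one g, ← Basis.toMatrix_mul_toMatrix_flip (Pi.basisFun k σ) b,
      ← linearSubst_linearSubst, ← hq, linearSubst, aeval_rename]
    simp only [Function.comp_def, aeval_X]
  rw [Algebra.adjoin_range_eq_range_aeval]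
  exact ⟨q, hg.symm⟩

theorem exists_linearForms_of_finrank_range_dirDerivMap_le {k σ : Type*} [Field k] [CharZero k]
    [Fintype σ] {g : MvPolynomial σ k} {t : ℕ}
    (h : finrank k (LinearMap.range (dirDerivMap g)) ≤ t) :
    ∃ ℓ : Fin t → MvPolynomial σ k,
      (∀ i, ℓ i ∈ homogeneousSubmodule σ k 1) ∧ g ∈ Algebra.adjoin k (Set.range ℓ) := by
  set V := LinearMap.ker (dirDerivMap g) with hV
  obtain ⟨W, hWV⟩ := V.exists_isCompl
  let b := ((finBasis k W).prod (finBasis k V)).map (Submodule.prodEquivOfIsCompl W V hWV.symm)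
  have hb : ∀ j, dirDeriv (b (Sum.inr j)) g = 0 := fun j => by
    rw [← dirDerivMap_apply, ← LinearMap.mem_ker, ← hV]
    simp [b, Submodule.coe_prodEquivOfIsCompl']
  have hWt : finrank k W ≤ t := by
    have := Submodule.finrank_add_eq_of_isCompl hWV.symm
    have := (dirDerivMap g).finrank_range_add_finrank_ker
    rw [← hV] at this
    omega
  exact Algebra.exists_adjoin_range_fin_of_le _ hWt
    (fun _ => linearSubst_X_mem_homogeneousSubmodule _ _)
    (mem_adjoin_of_dirDeriv_basis_eq_zero b hb)

theorem finrank_range_dirDerivMap_le_of_mem_adjoin {k σ : Type*} [Field k] [Fintype σ] {t : ℕ}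
    {g : MvPolynomial σ k} {ℓ : Fin t → MvPolynomial σ k}
    (hℓ : ∀ i, ℓ i ∈ homogeneousSubmodule σ k 1) (hg : g ∈ Algebra.adjoin k (Set.range ℓ)) :
    finrank k (LinearMap.range (dirDerivMap g)) ≤ t := by
  simp_rw [homogeneousSubmodule_one_eq_span_X, ← Fintype.range_linearCombination] at hℓ
  choose a ha using hℓ
  have hker : LinearMap.ker (Matrix.of a).mulVecLin ≤ LinearMap.ker (dirDerivMap g) := by
    intro c hc
    have hℓc : Set.EqOn (dirDeriv c) (0 : Derivation k _ _) (Set.range ℓ) := by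
      rintro _ ⟨i, rfl⟩
      rw [← ha i, dirDeriv_linearCombination_X, Derivation.zero_apply, C_eq_zero]
      exact congrFun hc i
    rw [LinearMap.mem_ker, dirDerivMap_apply]
    exact Derivation.eqOn_adjoin hℓc hg
  calc finrank k (LinearMap.range (dirDerivMap g))
      ≤ finrank k (LinearMap.range (Matrix.of a).mulVecLin) :=
        LinearMap.finrank_range_le_of_ker_le hker
    _ ≤ t := (Submodule.finrank_le _).trans (finrank_fin_fun k).le

end MvPolynomial

section Apolar
variable {k : Type*} [Field k] {N : ℕ}

noncomputable def apolarMonomial (α : Fin N →₀ ℕ) (g : MvPolynomial (Fin N) k) :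
    MvPolynomial (Fin N) k :=
  g.support.sum fun β =>
    (g.coeff β * ∏ i, ((β i).descFactorial (α i) : k)) • monomial (β - α) (1 : k)

theorem apolar_eq_constr (f g : MvPolynomial (Fin N) k) :
    apolar f g = (basisMonomials (Fin N) k).constr k (fun α => apolarMonomial α g) f := by
  rw [Basis.constr_apply, apolar, Finsupp.sum]
  refine Finset.sum_congr rfl fun α _ => ?_
  rw [apolarMonomial, Finset.smul_sum]
  refine Finset.sum_congr rfl fun β _ => ?_
  rw [mul_assoc, mul_smul]
  rfl

theorem apolarMonomial_single_one (i : Fin N) (g : MvPolynomial (Fin N) k) :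
    apolarMonomial (Finsupp.single i 1) g = pderiv i g := by
  classical
  conv_rhs => rw [g.as_sum, map_sum]
  refine Finset.sum_congr rfl fun β _ => ?_
  rw [pderiv_monomial, Fintype.prod_eq_single i fun j hj => by simp [Ne.symm hj]]
  simp [smul_monomial]

theorem apolar_linearCombination_X (c : Fin N → k) (g : MvPolynomial (Fin N) k) :
    apolar (Fintype.linearCombination k X c) g = dirDerivMap g c := by
  rw [dirDerivMap_apply, dirDeriv_apply, apolar_eq_constr, Fintype.linearCombination_apply, map_sum]
  refine Finset.sum_congr rfl fun i _ => ?_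
  have hX : (X i : MvPolynomial (Fin N) k) = basisMonomials (Fin N) k (Finsupp.single i 1) := rfl
  rw [map_smul, hX, Basis.constr_basis, apolarMonomial_single_one]

theorem finrank_map_mk_homogeneousSubmodule_one_eq {g : MvPolynomial (Fin N) k}
    {I : Ideal (MvPolynomial (Fin N) k)}
    (hI : ∀ f, f ∈ I ↔ apolar f g = 0) :
    finrank k (Submodule.map (Ideal.Quotient.mkₐ k I).toLinearMap
      (homogeneousSubmodule (Fin N) k 1)) = finrank k (LinearMap.range (dirDerivMap g)) := by
  have hker : LinearMap.ker ((Ideal.Quotient.mkₐ k I).toLinearMap ∘ₗ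
      Fintype.linearCombination k X) = LinearMap.ker (dirDerivMap g) := by
    ext c
    simp [Ideal.Quotient.eq_zero_iff_mem, hI, apolar_linearCombination_X]
  rw [homogeneousSubmodule_one_eq_span_X, ← Fintype.range_linearCombination,
    ← LinearMap.range_comp]
  exact le_antisymm (LinearMap.finrank_range_le_of_ker_le hker.ge)
    (LinearMap.finrank_range_le_of_ker_le hker.le)

end Apolar

theorem stmt_5_general (k : Type*) [Field k] [CharZero k] (N t : ℕ)
    (g : MvPolynomial (Fin N) k)
    (I : Ideal (MvPolynomial (Fin N) k))
    (hI : ∀ f, f ∈ I ↔ apolar f g = 0) :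
    Module.finrank k
      (Submodule.map (Ideal.Quotient.mkₐ k I).toLinearMap
        (homogeneousSubmodule (Fin N) k 1)) ≤ t ↔
    ∃ ℓ : Fin t → MvPolynomial (Fin N) k,
      (∀ i, ℓ i ∈ homogeneousSubmodule (Fin N) k 1) ∧
      g ∈ Algebra.adjoin k (Set.range ℓ) := by
  rw [finrank_map_mk_homogeneousSubmodule_one_eq hI]
  exact ⟨exists_linearForms_of_finrank_range_dirDerivMap_le,
    fun ⟨_, hℓ, hg⟩ => finrank_range_dirDerivMap_le_of_mem_adjoin hℓ hg⟩

/-- Let `g ∈ R_d`, `A = S/g^⊥`, `t ≤ N`.  Then `dim_k A_1 ≤ t` iff there are linear forms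
`ℓ_1,…,ℓ_t ∈ R_1` with `g ∈ k[ℓ_1,…,ℓ_t]`. -/
theorem stmt_5 (k : Type*) [Field k] [IsAlgClosed k] [CharZero k] (N d t : ℕ) (ht : t ≤ N)
    (g : MvPolynomial (Fin N) k) (hgd : g ∈ homogeneousSubmodule (Fin N) k d)
    (I : Ideal (MvPolynomial (Fin N) k))
    (hI : ∀ f, f ∈ I ↔ apolar f g = 0) :
    Module.finrank k
      (Submodule.map (Ideal.Quotient.mkₐ k I).toLinearMap
        (homogeneousSubmodule (Fin N) k 1)) ≤ t ↔
    ∃ ℓ : Fin t → MvPolynomial (Fin N) k,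
      (∀ i, ℓ i ∈ homogeneousSubmodule (Fin N) k 1) ∧
      g ∈ Algebra.adjoin k (Set.range ℓ) :=
  stmt_5_general k N t g I hI
end

section
/- Let X be a zero-dimensional scheme of degree d with two embeddings X ⊆ P^N and X ⊆ P^{N'}. Then h^0(X, N_{X|P^N}) - dN = h^0(X, N_{X|P^{N'}}) - dN', where N_{X|P^M} denotes the normal sheaf of the respective embedding. -/
/-!
Embed `X` both ways at once. If `I ⊆ S = k[x]` cuts out `X` and `gⱼ ∈ S` lift the coordinates `yⱼ`
of the second embedding, then `X ⊆ 𝔸^{N+N'}` is cut out by the graph ideal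
`K = {p ∈ S[y] : p(x, g) ∈ I}`. Modulo `K²`, every `p ∈ K` equals its first order Taylor expansion
`p(x, g) + ∑ⱼ ∂ⱼp(x, g) (yⱼ - gⱼ)`, so a homomorphism `K → S[y]/K` amounts to a homomorphism
`I → S/I` together with arbitrary values on the `yⱼ - gⱼ`; thus `h⁰(N_K) = h⁰(N_I) + dN'`.
Exchanging the roles of `x` and `y` yields the same ideal `K`, whence also
`h⁰(N_K) = h⁰(N_I') + dN`.
-/

set_option synthInstance.maxHeartbeats 1000000
set_option maxHeartbeats 1000000

open MvPolynomial

/-- The conormal module `I/I²`. -/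
noncomputable abbrev conormalMod {S : Type*} [CommRing S] (I : Ideal S) :=
  (I : Submodule S S) ⧸ (Submodule.comap (I : Submodule S S).subtype
    ((I ^ 2 : Ideal S) : Submodule S S))

section
variable {R : Type*} [CommRing R]

theorem Ideal.Quotient.smul_eq_mk_mul (J : Ideal R) (r : R) (w : R ⧸ J) :
    r • w = Ideal.Quotient.mk J r * w :=
  Algebra.smul_def r w

theorem LinearMap.apply_eq_zero_of_mem_sq {J : Ideal R} (f : J →ₗ[R] R ⧸ J) (x : J)
    (hx : (x : R) ∈ J ^ 2) : f x = 0 := by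
  have hle : J ^ 2 ≤ (LinearMap.ker f).map J.subtype := by
    rw [pow_two, Ideal.mul_le]
    intro a ha b hb
    refine ⟨a • ⟨b, hb⟩, ?_, rfl⟩
    rw [SetLike.mem_coe, LinearMap.mem_ker, map_smul, Ideal.Quotient.smul_eq_mk_mul,
      Ideal.Quotient.eq_zero_iff_mem.mpr ha, zero_mul]
  obtain ⟨y, hy, hyx⟩ := hle hx
  rwa [← Subtype.ext hyx]

variable (k : Type*) [CommRing k] [Algebra k R]

noncomputable def homConormalEquiv (I : Ideal R) :
    (conormalMod I →ₗ[R] R ⧸ I) ≃ₗ[k] (I →ₗ[R] R ⧸ I) where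
  toFun f := f ∘ₗ Submodule.mkQ _
  invFun u := Submodule.liftQ _ u fun x hx => u.apply_eq_zero_of_mem_sq x hx
  map_add' _ _ := rfl
  map_smul' _ _ := rfl
  left_inv _ := Submodule.linearMap_qext _ rfl
  right_inv _ := rfl

end

theorem Module.Finite.linearMap_of_finite {k S M N : Type*} [CommRing k] [IsNoetherianRing k]
    [CommRing S] [AddCommGroup M] [Module S M] [Module.Finite S M] [AddCommGroup N] [Module S N]
    [Module k N] [SMulCommClass S k N] [Module.Finite k N] : Module.Finite k (M →ₗ[S] N) := by
  obtain ⟨n, s, hs⟩ := Module.Finite.exists_fin (R := S) (M := M)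
  let restrict : (M →ₗ[S] N) →ₗ[k] (Fin n → N) :=
    { toFun f i := f (s i), map_add' _ _ := rfl, map_smul' _ _ := rfl }
  exact .of_injective restrict fun f g hfg => LinearMap.ext_on_range hs (congrFun hfg)

namespace MvPolynomial
variable {S τ : Type*} [CommRing S] [Fintype τ]

theorem sub_sum_pderiv_mem_span_sq (g : τ → S) (p : MvPolynomial τ S) :
    p - C (aeval g p) - ∑ j, C (aeval g (pderiv j p)) * (X j - C (g j)) ∈
      Ideal.span (Set.range fun j => X j - C (g j)) ^ 2 := by
  classical
  set 𝔪 := Ideal.span (Set.range fun j => X j - C (g j))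
  have hX (j : τ) : X j - C (g j) ∈ 𝔪 := Ideal.subset_span ⟨j, rfl⟩
  induction p using MvPolynomial.induction_on with
  | C a => simp
  | add p q hp hq =>
    convert add_mem hp hq using 1
    simp only [map_add, add_mul, Finset.sum_add_distrib]
    ring
  | mul_X p i hp =>
    set L := ∑ j, C (aeval g (pderiv j p)) * (X j - C (g j))
    have hL : L ∈ 𝔪 := Ideal.sum_mem _ fun j _ => Ideal.mul_mem_left _ _ (hX j)
    have hsum : ∑ j, C (aeval g (pderiv j (p * X i))) * (X j - C (g j)) =
        C (g i) * L + C (aeval g p) * (X i - C (g i)) := by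
      simp [pderiv_X, Pi.single_apply, add_mul, Finset.sum_add_distrib, L,
        Finset.mul_sum, mul_assoc, apply_ite, add_comm]
    have hstep : p * X i - C (aeval g (p * X i)) -
        ∑ j, C (aeval g (pderiv j (p * X i))) * (X j - C (g j)) =
        X i * (p - C (aeval g p) - L) + (X i - C (g i)) * L := by
      rw [hsum, map_mul, aeval_X, map_mul]
      ring
    rw [hstep, sq]
    exact add_mem (Ideal.mul_mem_left _ _ (sq 𝔪 ▸ hp)) (Ideal.mul_mem_mul (hX i) hL)

end MvPolynomial

namespace Ideal

variable {k R R' : Type*} [CommRing k] [CommRing R] [CommRing R'] [Algebra k R] [Algebra k R']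
  (σ : R ≃ₐ[k] R') {J : Ideal R} {J' : Ideal R'}

noncomputable def quotientEquivAlgOfEqComap (h : J = J'.comap σ) : (R ⧸ J) ≃ₐ[k] R' ⧸ J' :=
  J.quotientEquivAlg J' σ (by
    subst h; exact (Ideal.map_comap_of_surjective (σ : R →+* R') σ.surjective J').symm)

theorem quotientEquivAlgOfEqComap_symm (h : J = J'.comap σ) (h' : J' = J.comap σ.symm) :
    (quotientEquivAlgOfEqComap σ h).symm = quotientEquivAlgOfEqComap σ.symm h' :=
  rfl

theorem quotientEquivAlgOfEqComap_smul (h : J = J'.comap σ) (r : R) (w : R ⧸ J) :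
    quotientEquivAlgOfEqComap σ h (r • w) = σ r • quotientEquivAlgOfEqComap σ h w := by
  simp only [Algebra.smul_def, map_mul, Ideal.Quotient.algebraMap_eq]
  rfl

theorem symm_mem_of_eq_comap (h : J = J'.comap σ) (y : J') : σ.symm y ∈ J := by
  simp [h]

noncomputable def homQuotientMap (h : J = J'.comap σ) :
    (J →ₗ[R] R ⧸ J) →ₗ[k] (J' →ₗ[R'] R' ⧸ J') where
  toFun f :=
    { toFun y := quotientEquivAlgOfEqComap σ h (f ⟨σ.symm y, symm_mem_of_eq_comap σ h y⟩)
      map_add' y z := by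
        simp only [← map_add]
        congr 2; ext; simp
      map_smul' r y := by
        have : (⟨σ.symm (r • y : J'), symm_mem_of_eq_comap σ h (r • y)⟩ : J) =
            σ.symm r • ⟨σ.symm y, symm_mem_of_eq_comap σ h y⟩ := by ext; simp
        simp only [this, map_smul, quotientEquivAlgOfEqComap_smul, AlgEquiv.apply_symm_apply,
          RingHom.id_apply] }
  map_add' _ _ := by ext; simp
  map_smul' _ _ := by ext; simp

theorem comap_symm_of_eq_comap (h : J = J'.comap σ) : J' = J.comap σ.symm := by
  ext; simp [h]

noncomputable def homQuotientCongr (h : J = J'.comap σ) :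
    (J →ₗ[R] R ⧸ J) ≃ₗ[k] (J' →ₗ[R'] R' ⧸ J') :=
  .ofLinearMap (homQuotientMap σ h) (homQuotientMap σ.symm (comap_symm_of_eq_comap σ h))
    (by ext; simp [homQuotientMap, ← quotientEquivAlgOfEqComap_symm σ h])
    (by ext; simp [homQuotientMap, ← quotientEquivAlgOfEqComap_symm σ h])

end Ideal

section GraphIdeal
variable {S τ : Type*} [CommRing S] (I : Ideal S) (g : τ → S)

noncomputable def graphHom : MvPolynomial τ S →ₐ[S] S ⧸ I :=
  (Ideal.Quotient.mkₐ S I).comp (aeval g)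

noncomputable def graphIdeal : Ideal (MvPolynomial τ S) := RingHom.ker (graphHom I g)

variable {I g}

theorem mem_graphIdeal {p : MvPolynomial τ S} : p ∈ graphIdeal I g ↔ aeval g p ∈ I := by
  simp [graphIdeal, graphHom, Ideal.Quotient.eq_zero_iff_mem]

theorem C_mem_graphIdeal {x : S} (hx : x ∈ I) : C x ∈ graphIdeal I g := by
  simpa [mem_graphIdeal] using hx

theorem X_sub_C_mem_graphIdeal (j : τ) : X j - C (g j) ∈ graphIdeal I g := by
  simp [mem_graphIdeal]

theorem span_X_sub_C_le_graphIdeal :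
    Ideal.span (Set.range fun j => X j - C (g j)) ≤ graphIdeal I g :=
  Ideal.span_le.mpr (Set.range_subset_iff.mpr X_sub_C_mem_graphIdeal)

variable (I g)

noncomputable def graphQuotientEquiv : (MvPolynomial τ S ⧸ graphIdeal I g) ≃ₐ[S] S ⧸ I :=
  Ideal.quotientKerAlgEquivOfSurjective (f := graphHom I g) fun w => by
    obtain ⟨s, rfl⟩ := Ideal.Quotient.mk_surjective w
    exact ⟨C s, by simp [graphHom]⟩

@[simp]
theorem graphQuotientEquiv_mk (p : MvPolynomial τ S) :
    graphQuotientEquiv I g (Ideal.Quotient.mk _ p) = Ideal.Quotient.mk I (aeval g p) :=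
  rfl

@[simp]
theorem graphQuotientEquiv_symm_mk (x : S) :
    (graphQuotientEquiv I g).symm (Ideal.Quotient.mk I x) = Ideal.Quotient.mk _ (C x) := by
  rw [AlgEquiv.symm_apply_eq]; simp

end GraphIdeal

section HomGraphIdeal
variable {S τ : Type*} [CommRing S] {I : Ideal S} {g : τ → S}

noncomputable def restrictGraphHom
    (f : graphIdeal I g →ₗ[MvPolynomial τ S] MvPolynomial τ S ⧸ graphIdeal I g) :
    I →ₗ[S] S ⧸ I where
  toFun x := graphQuotientEquiv I g (f ⟨C (x : S), C_mem_graphIdeal x.2⟩)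
  map_add' x y := by
    simp only [← map_add]
    congr 2; ext; simp
  map_smul' s x := by
    have : (⟨C (s • x : I), C_mem_graphIdeal (s • x).2⟩ : graphIdeal I g) =
        (C s : MvPolynomial τ S) • ⟨C (x : S), C_mem_graphIdeal x.2⟩ := by ext; simp
    rw [this, map_smul, Ideal.Quotient.smul_eq_mk_mul, map_mul, graphQuotientEquiv_mk, aeval_C]
    rfl

variable [Fintype τ]

theorem apply_graphIdeal_eq_add_sum_pderiv
    (f : graphIdeal I g →ₗ[MvPolynomial τ S] MvPolynomial τ S ⧸ graphIdeal I g)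
    (p : graphIdeal I g) :
    f p = f ⟨C (aeval g p), C_mem_graphIdeal (mem_graphIdeal.mp p.2)⟩ +
      ∑ j, Ideal.Quotient.mk _ (C (aeval g (pderiv j (p : MvPolynomial τ S)))) *
        f ⟨X j - C (g j), X_sub_C_mem_graphIdeal j⟩ := by
  set q : graphIdeal I g := ⟨C (aeval g p), C_mem_graphIdeal (mem_graphIdeal.mp p.2)⟩ +
    ∑ j, (C (aeval g (pderiv j (p : MvPolynomial τ S))) : MvPolynomial τ S) •
      (⟨X j - C (g j), X_sub_C_mem_graphIdeal j⟩ : graphIdeal I g)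
  have hq : f (p - q) = 0 := by
    refine f.apply_eq_zero_of_mem_sq _ (Ideal.pow_right_mono span_X_sub_C_le_graphIdeal 2 ?_)
    convert sub_sum_pderiv_mem_span_sq g (p : MvPolynomial τ S) using 1
    simp [q, sub_sub]
  calc f p = f (p - q) + f q := by rw [← map_add, sub_add_cancel]
    _ = _ := by
      simp only [hq, zero_add, q, map_add, map_sum, map_smul, Ideal.Quotient.smul_eq_mk_mul]

noncomputable def extendGraphHom (u : I →ₗ[S] S ⧸ I) (a : τ → S ⧸ I) :
    graphIdeal I g →ₗ[MvPolynomial τ S] MvPolynomial τ S ⧸ graphIdeal I g where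
  toFun p := (graphQuotientEquiv I g).symm
    (u ⟨aeval g (p : MvPolynomial τ S), mem_graphIdeal.mp p.2⟩ +
      ∑ j, Ideal.Quotient.mk I (aeval g (pderiv j (p : MvPolynomial τ S))) * a j)
  map_add' p q := by
    have : (⟨aeval g (p + q : graphIdeal I g), mem_graphIdeal.mp (p + q).2⟩ : I) =
        ⟨aeval g (p : MvPolynomial τ S), mem_graphIdeal.mp p.2⟩ +
          ⟨aeval g (q : MvPolynomial τ S), mem_graphIdeal.mp q.2⟩ := by
      ext; simp
    rw [← map_add, this, map_add]
    simp only [Submodule.coe_add, map_add, add_mul, Finset.sum_add_distrib]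
    abel
  map_smul' t p := by
    have hp : Ideal.Quotient.mk I (aeval g (p : MvPolynomial τ S)) = 0 :=
      Ideal.Quotient.eq_zero_iff_mem.mpr (mem_graphIdeal.mp p.2)
    have hu : (⟨aeval g (t • p : graphIdeal I g), mem_graphIdeal.mp (t • p).2⟩ : I) =
        aeval g t • ⟨aeval g (p : MvPolynomial τ S), mem_graphIdeal.mp p.2⟩ := by ext; simp
    have ht : (graphQuotientEquiv I g).symm (Ideal.Quotient.mk I (aeval g t)) =
        Ideal.Quotient.mk _ t := by
      rw [AlgEquiv.symm_apply_eq]; rfl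
    rw [RingHom.id_apply, Ideal.Quotient.smul_eq_mk_mul, ← ht, ← map_mul, hu, map_smul,
      Ideal.Quotient.smul_eq_mk_mul]
    congr 1
    simp only [Submodule.coe_smul, smul_eq_mul, pderiv_mul, map_add, map_mul, hp, mul_zero,
      zero_add, mul_add, Finset.mul_sum, mul_assoc]

variable (k : Type*) [CommRing k] [Algebra k S] (I g)

noncomputable def homGraphIdealEquiv :
    (graphIdeal I g →ₗ[MvPolynomial τ S] MvPolynomial τ S ⧸ graphIdeal I g) ≃ₗ[k]
      (I →ₗ[S] S ⧸ I) × (τ → S ⧸ I) where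
  toFun f := (restrictGraphHom f,
    fun j => graphQuotientEquiv I g (f ⟨X j - C (g j), X_sub_C_mem_graphIdeal j⟩))
  invFun ua := extendGraphHom ua.1 ua.2
  map_add' f f' := by ext <;> simp [restrictGraphHom]
  map_smul' c f := by
    have hθ (w : MvPolynomial τ S ⧸ graphIdeal I g) :
        graphQuotientEquiv I g (c • w) = c • graphQuotientEquiv I g w := by
      rw [← algebraMap_smul S c w, map_smul, algebraMap_smul]
    ext <;> simp [restrictGraphHom, hθ]
  left_inv f := by
    ext p
    simp [extendGraphHom, restrictGraphHom, apply_graphIdeal_eq_add_sum_pderiv f p]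
  right_inv ua := by
    ext x
    · simp [extendGraphHom, restrictGraphHom]
    · classical
      simp [extendGraphHom, pderiv_X, Pi.single_apply]
      exact map_zero ua.1

end HomGraphIdeal

theorem finrank_hom_graphIdeal (k : Type*) {S τ : Type*} [Field k] [CommRing S] [Algebra k S]
    [IsNoetherianRing S] [Fintype τ] (I : Ideal S) [Module.Finite k (S ⧸ I)] (g : τ → S) :
    Module.finrank k (graphIdeal I g →ₗ[MvPolynomial τ S] MvPolynomial τ S ⧸ graphIdeal I g) =
      Module.finrank k (I →ₗ[S] S ⧸ I) + Fintype.card τ * Module.finrank k (S ⧸ I) := by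
  have : Module.Finite k (I →ₗ[S] S ⧸ I) := Module.Finite.linearMap_of_finite
  rw [(homGraphIdealEquiv I g k).finrank_eq, Module.finrank_prod, Module.finrank_pi_fintype,
    Finset.sum_const, Finset.card_univ, smul_eq_mul]

theorem graphIdeal_eq_comap_commAlgEquiv {k σ τ : Type*} [CommRing k]
    {I : Ideal (MvPolynomial σ k)} {I' : Ideal (MvPolynomial τ k)}
    (α : (MvPolynomial σ k ⧸ I) ≃ₐ[k] (MvPolynomial τ k ⧸ I'))
    {g : τ → MvPolynomial σ k} {g' : σ → MvPolynomial τ k}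
    (hg : ∀ j, Ideal.Quotient.mk I (g j) = α.symm (Ideal.Quotient.mk I' (X j)))
    (hg' : ∀ i, Ideal.Quotient.mk I' (g' i) = α (Ideal.Quotient.mk I (X i))) :
    graphIdeal I g = (graphIdeal I' g').comap (commAlgEquiv k τ σ) := by
  have hcomm : (α : _ →ₐ[k] _).comp ((graphHom I g).restrictScalars k) =
      ((graphHom I' g').restrictScalars k).comp (commAlgEquiv k τ σ : _ →ₐ[k] _) := by
    ext
    · simp [graphHom, hg']
    · simp [graphHom, hg]
  ext p
  have h := DFunLike.congr_fun hcomm p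
  simp only [AlgHom.comp_apply, AlgHom.restrictScalars_apply, AlgEquiv.coe_toAlgHom] at h
  simp only [graphIdeal, Ideal.mem_comap, RingHom.mem_ker, ← h, map_eq_zero_iff _ α.injective]

theorem stmt_13_general (k : Type*) [Field k] (N N' d : ℕ)
    (I : Ideal (MvPolynomial (Fin N) k)) (I' : Ideal (MvPolynomial (Fin N') k))
    [FiniteDimensional k (MvPolynomial (Fin N) k ⧸ I)]
    (hiso : Nonempty ((MvPolynomial (Fin N) k ⧸ I) ≃ₐ[k] (MvPolynomial (Fin N') k ⧸ I')))
    (hd : Module.finrank k (MvPolynomial (Fin N) k ⧸ I) = d) :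
    (Module.finrank k
        (conormalMod I →ₗ[MvPolynomial (Fin N) k] (MvPolynomial (Fin N) k ⧸ I)) : ℤ) -
      d * N =
    (Module.finrank k
        (conormalMod I' →ₗ[MvPolynomial (Fin N') k] (MvPolynomial (Fin N') k ⧸ I')) : ℤ) -
      d * N' := by
  obtain ⟨α⟩ := hiso
  have : FiniteDimensional k (MvPolynomial (Fin N') k ⧸ I') := .equiv α.toLinearEquiv
  have hd' : Module.finrank k (MvPolynomial (Fin N') k ⧸ I') = d := by
    rw [← hd, α.toLinearEquiv.finrank_eq]
  choose g hg using fun j : Fin N' =>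
    Ideal.Quotient.mk_surjective (α.symm (Ideal.Quotient.mk I' (X j)))
  choose g' hg' using fun i : Fin N =>
    Ideal.Quotient.mk_surjective (α (Ideal.Quotient.mk I (X i)))
  have key := (Ideal.homQuotientCongr _ (graphIdeal_eq_comap_commAlgEquiv α hg hg')).finrank_eq
  rw [finrank_hom_graphIdeal, finrank_hom_graphIdeal, hd, hd', Fintype.card_fin,
    Fintype.card_fin] at key
  rw [(homConormalEquiv k I).finrank_eq, (homConormalEquiv k I').finrank_eq]
  linarith [congrArg (Nat.cast : ℕ → ℤ) key]

/-- Let `X` be a zero-dimensional scheme of degree `d` with two embeddings `X ⊆ ℙᴺ` and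
`X ⊆ ℙ^{N'}`.  Then `h⁰(X, N_{X|ℙᴺ}) - dN = h⁰(X, N_{X|ℙ^{N'}}) - dN'`.  Since `X` is
zero-dimensional (affine), the two embeddings are given by ideals `I ⊆ k[x₁,…,x_N]` and
`I' ⊆ k[x₁,…,x_{N'}]` with isomorphic quotients, and
`h⁰(X, N_{X|ℙᴹ}) = dim_k Hom(I/I², S/I)`. -/
theorem stmt_13 (k : Type*) [Field k] [IsAlgClosed k] [CharZero k] (N N' d : ℕ)
    (I : Ideal (MvPolynomial (Fin N) k)) (I' : Ideal (MvPolynomial (Fin N') k))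
    [FiniteDimensional k (MvPolynomial (Fin N) k ⧸ I)]
    (hiso : Nonempty ((MvPolynomial (Fin N) k ⧸ I) ≃ₐ[k] (MvPolynomial (Fin N') k ⧸ I')))
    (hd : Module.finrank k (MvPolynomial (Fin N) k ⧸ I) = d) :
    (Module.finrank k
        (conormalMod I →ₗ[MvPolynomial (Fin N) k] (MvPolynomial (Fin N) k ⧸ I)) : ℤ) -
      d * N =
    (Module.finrank k
        (conormalMod I' →ₗ[MvPolynomial (Fin N') k] (MvPolynomial (Fin N') k ⧸ I')) : ℤ) -
      d * N' :=
  stmt_13_general k N N' d I I' hiso hd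
end

section
/- In k[b, x_1, x_2, x_3, x_4], the ideal J_1 = (x_1x_2, x_2^4 - x_1^4, x_ix_j for 1 ≤ i < j ≤ 4 with 3 ≤ j, x_3^2 - x_1^4, x_4^2 - b·x_4 - x_1^4) equals the intersection (x_1, x_2, x_3, x_4 - b) ∩ (x_1x_2, x_2^4 - x_1^4, x_ix_j, x_3^2 - x_1^4, x_4^2, b·x_4 + x_1^4). -/
/-!
Put `q = b x₄ + x₁⁴` and `P = (x₁, x₂, x₃, x₄ - b)`. The second ideal of the intersection is
`J₁ + (q)` and `J₁ ⊆ P`, so by the modular law `P ∩ (J₁ + (q)) = J₁ + (P ∩ (q))`. The ideal `P`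
is prime, being the kernel of the retraction `x₁, x₂, x₃ ↦ 0`, `x₄ ↦ b`, and `q ∉ P` because `q`
maps to `b²`. Hence `P ∩ (q) = P·(q)`, and the four products of `q` with the generators of `P`
are explicit combinations of the generators of `J₁`.
-/

open MvPolynomial

theorem inf_sup_eq_left_of_le {α : Type*} [Lattice α] [IsModularLattice α] {a b c : α}
    (hab : a ≤ b) (hc : c ⊓ b ≤ a) : b ⊓ (a ⊔ c) = a := by
  rw [inf_comm, sup_inf_assoc_of_le _ hab, sup_eq_left]
  exact hc

theorem Ideal.IsPrime.span_singleton_inf_le {R : Type*} [CommSemiring R] {P I : Ideal R} {q : R}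
    (hP : P.IsPrime) (hq : q ∉ P) (hPq : P * Ideal.span {q} ≤ I) : Ideal.span {q} ⊓ P ≤ I := by
  rintro _ ⟨hf, hfP⟩
  obtain ⟨c, rfl⟩ := Ideal.mem_span_singleton'.1 hf
  exact hPq (Ideal.mul_mem_mul ((hP.mem_or_mem hfP).resolve_right hq)
    (Ideal.mem_span_singleton_self q))

namespace MvPolynomial

variable {R σ : Type*} [CommRing R] {P : Ideal (MvPolynomial σ R)} {g : σ → MvPolynomial σ R}

theorem sub_aeval_mem (hg : ∀ i, X i - g i ∈ P) (f : MvPolynomial σ R) : f - aeval g f ∈ P := by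
  rw [← Ideal.Quotient.eq]
  change Ideal.Quotient.mkₐ R P f = ((Ideal.Quotient.mkₐ R P).comp (aeval g)) f
  congr 1
  refine algHom_ext fun i => ?_
  simpa [Ideal.Quotient.eq] using hg i

theorem ker_aeval_eq (hg : ∀ i, X i - g i ∈ P) (hP : P ≤ RingHom.ker (aeval g)) :
    RingHom.ker (aeval g) = P :=
  le_antisymm (fun f hf => by
    simpa only [RingHom.mem_ker.1 hf, sub_zero] using sub_aeval_mem hg f) hP

end MvPolynomial

noncomputable section

variable (R : Type*) [CommRing R]

-- `b = X 0` and `xᵢ = X i`.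
def J₁ : Ideal (MvPolynomial (Fin 5) R) :=
  Ideal.span {X 1 * X 2, X 2 ^ 4 - X 1 ^ 4, X 1 * X 3, X 2 * X 3, X 1 * X 4, X 2 * X 4, X 3 * X 4,
    X 3 ^ 2 - X 1 ^ 4, X 4 ^ 2 - X 0 * X 4 - X 1 ^ 4}

def P₁ : Ideal (MvPolynomial (Fin 5) R) := Ideal.span {X 1, X 2, X 3, X 4 - X 0}

def Q₁ : Ideal (MvPolynomial (Fin 5) R) :=
  Ideal.span {X 1 * X 2, X 2 ^ 4 - X 1 ^ 4, X 1 * X 3, X 2 * X 3, X 1 * X 4, X 2 * X 4, X 3 * X 4,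
    X 3 ^ 2 - X 1 ^ 4, X 4 ^ 2, X 0 * X 4 + X 1 ^ 4}

def q₁ : MvPolynomial (Fin 5) R := X 0 * X 4 + X 1 ^ 4

def retractP₁ : Fin 5 → MvPolynomial (Fin 5) R := ![X 0, 0, 0, 0, X 0]

theorem ker_aeval_retractP₁ : RingHom.ker (aeval (retractP₁ R)) = P₁ R := by
  refine ker_aeval_eq (fun i => ?_) ?_
  · fin_cases i
    · simp [retractP₁]
    all_goals exact Ideal.subset_span (by simp [retractP₁])
  · simp [P₁, Ideal.span_le, Set.insert_subset_iff, retractP₁]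

theorem J₁_le_P₁ : J₁ R ≤ P₁ R := by
  rw [← ker_aeval_retractP₁]
  simp [J₁, Ideal.span_le, Set.insert_subset_iff, retractP₁, sq]

theorem isPrime_P₁ [IsDomain R] : (P₁ R).IsPrime :=
  ker_aeval_retractP₁ R ▸ RingHom.ker_isPrime _

theorem q₁_notMem_P₁ [IsDomain R] : q₁ R ∉ P₁ R := by
  rw [← ker_aeval_retractP₁, RingHom.mem_ker]
  simp [q₁, retractP₁, X_ne_zero]

theorem P₁_mul_span_q₁_le : P₁ R * Ideal.span {q₁ R} ≤ J₁ R := by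
  simp only [P₁, Ideal.span_mul_span', Set.mul_singleton, Set.image_insert_eq, Set.image_singleton,
    Ideal.span_le, Set.insert_subset_iff, Set.singleton_subset_iff, SetLike.mem_coe]
  refine ⟨?_, ?_, ?_, ?_⟩
  · rw [show X 1 * q₁ R = X 0 * (X 1 * X 4) + X 3 * (X 1 * X 3) - X 1 * (X 3 ^ 2 - X 1 ^ 4) by
      rw [q₁]; ring]
    refine sub_mem (add_mem (Ideal.mul_mem_left _ _ ?_) (Ideal.mul_mem_left _ _ ?_))
      (Ideal.mul_mem_left _ _ ?_) <;> exact Ideal.subset_span (by simp)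
  · rw [show X 2 * q₁ R = X 0 * (X 2 * X 4) + X 1 ^ 3 * (X 1 * X 2) by rw [q₁]; ring]
    refine add_mem (Ideal.mul_mem_left _ _ ?_) (Ideal.mul_mem_left _ _ ?_) <;>
      exact Ideal.subset_span (by simp)
  · rw [show X 3 * q₁ R = X 0 * (X 3 * X 4) + X 1 ^ 3 * (X 1 * X 3) by rw [q₁]; ring]
    refine add_mem (Ideal.mul_mem_left _ _ ?_) (Ideal.mul_mem_left _ _ ?_) <;>
      exact Ideal.subset_span (by simp)
  · rw [show (X 4 - X 0) * q₁ R = X 0 * (X 4 ^ 2 - X 0 * X 4 - X 1 ^ 4) + X 1 ^ 3 * (X 1 * X 4) by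
      rw [q₁]; ring]
    refine add_mem (Ideal.mul_mem_left _ _ ?_) (Ideal.mul_mem_left _ _ ?_) <;>
      exact Ideal.subset_span (by simp)

theorem Q₁_eq_sup : Q₁ R = J₁ R ⊔ Ideal.span {q₁ R} := by
  have hq : q₁ R ∈ J₁ R ⊔ Ideal.span {q₁ R} := Ideal.mem_sup_right (Ideal.mem_span_singleton_self _)
  refine le_antisymm ?_ (sup_le ?_ ?_)
  · simp only [Q₁, Ideal.span_le, Set.insert_subset_iff, Set.singleton_subset_iff, SetLike.mem_coe]
    refine ⟨?_, ?_, ?_, ?_, ?_, ?_, ?_, ?_, ?x₄_sq, hq⟩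
    case x₄_sq =>
      rw [show (X 4 ^ 2 : MvPolynomial (Fin 5) R) = (X 4 ^ 2 - X 0 * X 4 - X 1 ^ 4) + q₁ R by
        rw [q₁]; ring]
      exact add_mem (Ideal.mem_sup_left (Ideal.subset_span (by simp))) hq
    all_goals exact Ideal.mem_sup_left (Ideal.subset_span (by simp))
  · simp only [J₁, Ideal.span_le, Set.insert_subset_iff, Set.singleton_subset_iff, SetLike.mem_coe]
    refine ⟨?_, ?_, ?_, ?_, ?_, ?_, ?_, ?_, ?x₄_rel⟩
    case x₄_rel =>
      rw [show (X 4 ^ 2 - X 0 * X 4 - X 1 ^ 4 : MvPolynomial (Fin 5) R) = X 4 ^ 2 - q₁ R by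
        rw [q₁]; ring]
      exact sub_mem (Ideal.subset_span (by simp)) (Ideal.subset_span (by simp [q₁]))
    all_goals exact Ideal.subset_span (by simp)
  · exact (Ideal.span_singleton_le_iff_mem _).2 (Ideal.subset_span (by simp [q₁]))

end

theorem stmt_16_general (k : Type*) [Field k] :
    (Ideal.span {X 1 * X 2, X 2 ^ 4 - X 1 ^ 4,
        X 1 * X 3, X 2 * X 3, X 1 * X 4, X 2 * X 4, X 3 * X 4,
        X 3 ^ 2 - X 1 ^ 4, X 4 ^ 2 - X 0 * X 4 - X 1 ^ 4} :
      Ideal (MvPolynomial (Fin 5) k)) =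
    (Ideal.span {X 1, X 2, X 3, X 4 - X 0} :
        Ideal (MvPolynomial (Fin 5) k)) ⊓
      Ideal.span {X 1 * X 2, X 2 ^ 4 - X 1 ^ 4,
        X 1 * X 3, X 2 * X 3, X 1 * X 4, X 2 * X 4, X 3 * X 4,
        X 3 ^ 2 - X 1 ^ 4, X 4 ^ 2, X 0 * X 4 + X 1 ^ 4} := by
  change J₁ k = P₁ k ⊓ Q₁ k
  rw [Q₁_eq_sup, inf_sup_eq_left_of_le (J₁_le_P₁ k)]
  exact (isPrime_P₁ k).span_singleton_inf_le (q₁_notMem_P₁ k) (P₁_mul_span_q₁_le k)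

/-- In `k[b, x₁, x₂, x₃, x₄]` (here `b = X 0`, `xᵢ = X i`), the ideal
`J₁ = (x₁x₂, x₂⁴ - x₁⁴, xᵢxⱼ (i<j, j∈{3,4}), x₃² - x₁⁴, x₄² - b·x₄ - x₁⁴)` equals
`(x₁, x₂, x₃, x₄ - b) ∩ (x₁x₂, x₂⁴ - x₁⁴, xᵢxⱼ, x₃² - x₁⁴, x₄², b·x₄ + x₁⁴)`. -/
theorem stmt_16 (k : Type*) [Field k] [IsAlgClosed k] [CharZero k] :
    (Ideal.span {X 1 * X 2, X 2 ^ 4 - X 1 ^ 4,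
        X 1 * X 3, X 2 * X 3, X 1 * X 4, X 2 * X 4, X 3 * X 4,
        X 3 ^ 2 - X 1 ^ 4, X 4 ^ 2 - X 0 * X 4 - X 1 ^ 4} :
      Ideal (MvPolynomial (Fin 5) k)) =
    (Ideal.span {X 1, X 2, X 3, X 4 - X 0} :
        Ideal (MvPolynomial (Fin 5) k)) ⊓
      Ideal.span {X 1 * X 2, X 2 ^ 4 - X 1 ^ 4,
        X 1 * X 3, X 2 * X 3, X 1 * X 4, X 2 * X 4, X 3 * X 4,
        X 3 ^ 2 - X 1 ^ 4, X 4 ^ 2, X 0 * X 4 + X 1 ^ 4} :=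
  stmt_16_general k
end

section
/- For b ≠ 0, in k[x_1,x_2,x_3,x_4] (with b ∈ k fixed), the algebra k[x_1,x_2,x_3,x_4]/J_1 where J_1 = (x_4^2, x_3x_4, x_2x_4, x_1x_4, x_1x_3, x_1x_2 + x_3^2, x_1^2 + x_2^2, x_3^3, x_2^2x_3, x_2^3, b·x_2x_3^2 - x_2x_3^2 - b^2·x_4) is isomorphic to k[x_1,x_2,x_3]/(x_1x_3, x_1x_2 + x_3^2, x_1^2 + x_2^2). -/
set_option synthInstance.maxHeartbeats 1000000
set_option maxHeartbeats 1000000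

open MvPolynomial

/-- For `b ≠ 0`, the algebra `k[x₁,…,x₄]/J₁` with
`J₁ = (x₄², x₃x₄, x₂x₄, x₁x₄, x₁x₃, x₁x₂+x₃², x₁²+x₂², x₃³, x₂²x₃, x₂³,
b·x₂x₃² - x₂x₃² - b²·x₄)` is isomorphic to `k[x₁,x₂,x₃]/(x₁x₃, x₁x₂+x₃², x₁²+x₂²)`.
(Here `x₁ = X 0` etc.) -/
theorem stmt_18 (k : Type*) [Field k] [IsAlgClosed k] [CharZero k] (b : k) (hb : b ≠ 0) :
    Nonempty
      ((MvPolynomial (Fin 4) k ⧸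
        (Ideal.span {X 3 ^ 2, X 2 * X 3, X 1 * X 3, X 0 * X 3, X 0 * X 2,
          X 0 * X 1 + X 2 ^ 2, X 0 ^ 2 + X 1 ^ 2, X 2 ^ 3, X 1 ^ 2 * X 2, X 1 ^ 3,
          C b * (X 1 * X 2 ^ 2) - X 1 * X 2 ^ 2 - C (b ^ 2) * X 3} :
          Ideal (MvPolynomial (Fin 4) k))) ≃ₐ[k]
      (MvPolynomial (Fin 3) k ⧸
        (Ideal.span {X 0 * X 2, X 0 * X 1 + X 2 ^ 2, X 0 ^ 2 + X 1 ^ 2} :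
          Ideal (MvPolynomial (Fin 3) k)))) := by
  set J : Ideal (MvPolynomial (Fin 4) k) := Ideal.span {X 3 ^ 2, X 2 * X 3, X 1 * X 3, X 0 * X 3,
    X 0 * X 2, X 0 * X 1 + X 2 ^ 2, X 0 ^ 2 + X 1 ^ 2, X 2 ^ 3, X 1 ^ 2 * X 2, X 1 ^ 3,
    C b * (X 1 * X 2 ^ 2) - X 1 * X 2 ^ 2 - C (b ^ 2) * X 3} with hJdef
  set I : Ideal (MvPolynomial (Fin 3) k) :=
    Ideal.span {X 0 * X 2, X 0 * X 1 + X 2 ^ 2, X 0 ^ 2 + X 1 ^ 2} with hIdef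
  set c : k := (b - 1) * (b ^ 2)⁻¹ with hcdef
  -- names
  set B := MvPolynomial (Fin 3) k ⧸ I with hB
  set A := MvPolynomial (Fin 4) k ⧸ J with hA
  let mk3 : MvPolynomial (Fin 3) k →ₐ[k] B := Ideal.Quotient.mkₐ k I
  let mk4 : MvPolynomial (Fin 4) k →ₐ[k] A := Ideal.Quotient.mkₐ k J
  -- generators images in B
  have hmemI : ∀ p ∈ ({X 0 * X 2, X 0 * X 1 + X 2 ^ 2, X 0 ^ 2 + X 1 ^ 2} :
      Set (MvPolynomial (Fin 3) k)), mk3 p = 0 := by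
    intro p hp
    rw [show mk3 p = Ideal.Quotient.mk I p from rfl, Ideal.Quotient.eq_zero_iff_mem, hIdef]
    exact Ideal.subset_span hp
  have hi0 : mk3 (X 0) * mk3 (X 2) = 0 := by
    rw [← map_mul]; exact hmemI _ (by simp)
  have hi1 : mk3 (X 0) * mk3 (X 1) + mk3 (X 2) ^ 2 = 0 := by
    rw [← map_pow, ← map_mul, ← map_add]; exact hmemI _ (by simp)
  have hi2 : mk3 (X 0) ^ 2 + mk3 (X 1) ^ 2 = 0 := by
    rw [← map_pow, ← map_pow, ← map_add]; exact hmemI _ (by simp)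
  have hd0 : mk3 (X 2) ^ 3 = 0 := by linear_combination mk3 (X 2) * hi1 - mk3 (X 1) * hi0
  have hd1 : mk3 (X 1) ^ 2 * mk3 (X 2) = 0 := by
    linear_combination mk3 (X 2) * hi2 - mk3 (X 0) * hi0
  have hd2 : mk3 (X 1) ^ 3 = 0 := by
    linear_combination mk3 (X 1) * hi2 - mk3 (X 0) * hi1 + mk3 (X 2) * hi0
  -- the forward map
  let v : Fin 4 → B := ![mk3 (X 0), mk3 (X 1), mk3 (X 2),
    (algebraMap k B c) * (mk3 (X 1) * mk3 (X 2) ^ 2)]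
  let φ : MvPolynomial (Fin 4) k →ₐ[k] B := aeval v
  have hv0 : φ (X 0) = mk3 (X 0) := by simp [φ, v]
  have hv1 : φ (X 1) = mk3 (X 1) := by simp [φ, v]
  have hv2 : φ (X 2) = mk3 (X 2) := by simp [φ, v]
  have hv3 : φ (X 3) = (algebraMap k B c) * (mk3 (X 1) * mk3 (X 2) ^ 2) := by
    simp only [φ, aeval_X, v, Matrix.cons_val_three, Matrix.head_cons, Matrix.tail_cons,
      Matrix.head_fin_const]
  have hbc : (algebraMap k B (b ^ 2)) * (algebraMap k B c) = algebraMap k B b - 1 := by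
    rw [← map_mul, hcdef]
    rw [show b ^ 2 * ((b - 1) * (b ^ 2)⁻¹) = b - 1 by
      field_simp]
    rw [map_sub, map_one]
  have hJ0 : ∀ p ∈ J, φ p = 0 := by
    intro p hp
    refine (show J ≤ RingHom.ker φ from ?_) hp
    rw [hJdef, Ideal.span_le]
    intro q hq
    simp only [Set.mem_insert_iff, Set.mem_singleton_iff] at hq
    rw [SetLike.mem_coe, RingHom.mem_ker]
    rcases hq with rfl|rfl|rfl|rfl|rfl|rfl|rfl|rfl|rfl|rfl|rfl
    · rw [map_pow, hv3]
      linear_combination (algebraMap k B c) ^ 2 * mk3 (X 1) ^ 2 * mk3 (X 2) * hd0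
    · rw [map_mul, hv2, hv3]
      linear_combination (algebraMap k B c) * mk3 (X 1) * hd0
    · rw [map_mul, hv1, hv3]
      linear_combination (algebraMap k B c) * mk3 (X 2) * hd1
    · rw [map_mul, hv0, hv3]
      linear_combination (algebraMap k B c) * mk3 (X 2) ^ 2 * hi1 -
        (algebraMap k B c) * mk3 (X 2) * hd0
    · rw [map_mul, hv0, hv2]; exact hi0
    · rw [map_add, map_mul, map_pow, hv0, hv1, hv2]; exact hi1
    · rw [map_add, map_pow, map_pow, hv0, hv1]; exact hi2
    · rw [map_pow, hv2]; exact hd0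
    · rw [map_mul, map_pow, hv1, hv2]; exact hd1
    · rw [map_pow, hv1]; exact hd2
    · rw [map_sub, map_sub, map_mul, map_mul, map_mul, map_pow, aeval_C, aeval_C, hv1, hv2, hv3]
      linear_combination (-(mk3 (X 1) * mk3 (X 2) ^ 2)) * hbc
  let F : A →ₐ[k] B := Ideal.Quotient.liftₐ J φ hJ0
  -- the backward map
  let w : Fin 3 → A := ![mk4 (X 0), mk4 (X 1), mk4 (X 2)]
  let ψ : MvPolynomial (Fin 3) k →ₐ[k] A := aeval w
  have hw0 : ψ (X 0) = mk4 (X 0) := by simp [ψ, w]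
  have hw1 : ψ (X 1) = mk4 (X 1) := by simp [ψ, w]
  have hw2 : ψ (X 2) = mk4 (X 2) := by simp [ψ, w]
  have hmemJ : ∀ p ∈ ({X 3 ^ 2, X 2 * X 3, X 1 * X 3, X 0 * X 3, X 0 * X 2,
      X 0 * X 1 + X 2 ^ 2, X 0 ^ 2 + X 1 ^ 2, X 2 ^ 3, X 1 ^ 2 * X 2, X 1 ^ 3,
      C b * (X 1 * X 2 ^ 2) - X 1 * X 2 ^ 2 - C (b ^ 2) * X 3} :
      Set (MvPolynomial (Fin 4) k)), mk4 p = 0 := by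
    intro p hp
    rw [show mk4 p = Ideal.Quotient.mk J p from rfl, Ideal.Quotient.eq_zero_iff_mem, hJdef]
    exact Ideal.subset_span hp
  have hI0 : ∀ p ∈ I, ψ p = 0 := by
    intro p hp
    refine (show I ≤ RingHom.ker ψ from ?_) hp
    rw [hIdef, Ideal.span_le]
    intro q hq
    simp only [Set.mem_insert_iff, Set.mem_singleton_iff] at hq
    rw [SetLike.mem_coe, RingHom.mem_ker]
    rcases hq with rfl|rfl|rfl
    · rw [map_mul, hw0, hw2, ← map_mul]; exact hmemJ _ (by simp)
    · rw [map_add, map_mul, map_pow, hw0, hw1, hw2, ← map_pow, ← map_mul, ← map_add]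
      exact hmemJ _ (by simp)
    · rw [map_add, map_pow, map_pow, hw0, hw1, ← map_pow, ← map_pow, ← map_add]
      exact hmemJ _ (by simp)
  let G : B →ₐ[k] A := Ideal.Quotient.liftₐ I ψ hI0
  have hF : ∀ p, F (mk4 p) = φ p := fun p =>
    AlgHom.congr_fun (Ideal.Quotient.liftₐ_comp J φ hJ0) p
  have hG : ∀ p, G (mk3 p) = ψ p := fun p =>
    AlgHom.congr_fun (Ideal.Quotient.liftₐ_comp I ψ hI0) p
  -- key: G (φ (X 3)) = mk4 (X 3)
  have hlast : algebraMap k A b * (mk4 (X 1) * mk4 (X 2) ^ 2) -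
      mk4 (X 1) * mk4 (X 2) ^ 2 - algebraMap k A (b ^ 2) * mk4 (X 3) = 0 := by
    have := hmemJ (C b * (X 1 * X 2 ^ 2) - X 1 * X 2 ^ 2 - C (b ^ 2) * X 3) (by simp)
    simpa only [map_sub, map_mul, map_pow, ← Algebra.algebraMap_eq_smul_one,
      ← MvPolynomial.algebraMap_eq, AlgHom.commutes] using this
  have hAbc : (algebraMap k A ((b ^ 2)⁻¹)) * (algebraMap k A (b ^ 2)) = 1 := by
    rw [← map_mul, inv_mul_cancel₀ (pow_ne_zero 2 hb), map_one]
  have hAc : algebraMap k A c = (algebraMap k A b - 1) * algebraMap k A ((b ^ 2)⁻¹) := by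
    rw [hcdef, map_mul, map_sub, map_one]
  have hkey : algebraMap k A c * (mk4 (X 1) * mk4 (X 2) ^ 2) = mk4 (X 3) := by
    linear_combination (algebraMap k A ((b ^ 2)⁻¹)) * hlast + mk4 (X 3) * hAbc +
      (mk4 (X 1) * mk4 (X 2) ^ 2) * hAc
  refine ⟨AlgEquiv.ofAlgHom F G ?_ ?_⟩
  · apply Ideal.Quotient.algHom_ext
    apply MvPolynomial.algHom_ext
    intro i
    fin_cases i
    · show F (G (mk3 (X 0))) = mk3 (X 0)
      rw [hG, hw0, hF, hv0]
    · show F (G (mk3 (X 1))) = mk3 (X 1)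
      rw [hG, hw1, hF, hv1]
    · show F (G (mk3 (X 2))) = mk3 (X 2)
      rw [hG, hw2, hF, hv2]
  · apply Ideal.Quotient.algHom_ext
    apply MvPolynomial.algHom_ext
    intro i
    fin_cases i
    · show G (F (mk4 (X 0))) = mk4 (X 0)
      rw [hF, hv0, hG, hw0]
    · show G (F (mk4 (X 1))) = mk4 (X 1)
      rw [hF, hv1, hG, hw1]
    · show G (F (mk4 (X 2))) = mk4 (X 2)
      rw [hF, hv2, hG, hw2]
    · show G (F (mk4 (X 3))) = mk4 (X 3)
      rw [hF, hv3, ← Algebra.smul_def, map_smul, map_mul, map_pow, hG, hG, hw1, hw2]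
      exact (Algebra.smul_def c (mk4 (X 1) * mk4 (X 2) ^ 2)).trans hkey
end
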